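/- arXiv:1910.02856 — 9 statements merged into one kernel-verified Lean document; each statement's English description precedes it below -/
import Mathlib

section
/- Markov tree theorem: Let n ≥ 1 and let M : Matrix (Fin n) (Fin n) ℝ be a real matrix whose rows sum to one, i.e. ∀ i, ∑ j, M i j = 1 (nonnegativity of the entries is not needed). Define w : Fin n → ℝ by w j = ∑_{f ∈ T j} ∏_{i ≠ j} M i (f i), where T j is the (finite) set of spanning trees rooted at j. Then w is a left fixed vector of M: for every k : Fin n, ∑ i, w i * M i k = w k. -/
open scoped Classical

/-- If two functions agree away from `i`, and the `h1`-trajectory of `l` does not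
hit `i` before time `s`, then the two trajectories agree up to time `s`. -/
private lemma iter_agree {α : Type*} {h1 h2 : α → α} {i : α}
    (hag : ∀ x, x ≠ i → h1 x = h2 x) {l : α} {s : ℕ}
    (hmin : ∀ s', s' < s → h1^[s'] l ≠ i) :
    ∀ s' ≤ s, h2^[s'] l = h1^[s'] l := by
  intro s' hs'
  induction s' with
  | zero => rfl
  | succ m ih =>
    rw [Function.iterate_succ_apply', Function.iterate_succ_apply',
      ih (le_of_lt hs'), ← hag _ (hmin m hs')]

/-- Reachability of `i` transfers between functions agreeing away from `i`. -/
private lemma reach_transfer {α : Type*} {h1 h2 : α → α} {i : α}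
    (hag : ∀ x, x ≠ i → h1 x = h2 x) {l : α} (h : ∃ s, h1^[s] l = i) :
    ∃ s, h2^[s] l = i := by
  classical
  refine ⟨Nat.find h, ?_⟩
  rw [iter_agree hag (fun s' hs' => Nat.find_min h hs') _ le_rfl]
  exact Nat.find_spec h

/-- The predecessor of `k` on its cycle. -/
private noncomputable def rootOf {α : Type*} (g : α → α) (k : α) : α :=
  g^[Function.minimalPeriod g k - 1] k

private lemma rootOf_spec {α : Type*} (g : α → α) (k : α)
    (h : ∃ t, g^[t + 1] k = k) : g (rootOf g k) = k := by
  obtain ⟨t, ht⟩ := h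
  have hper : Function.IsPeriodicPt g (t + 1) k := ht
  have hp : 0 < Function.minimalPeriod g k :=
    hper.minimalPeriod_pos (Nat.succ_pos t)
  have h1 : g (rootOf g k) = g^[Function.minimalPeriod g k - 1 + 1] k :=
    (Function.iterate_succ_apply' g _ k).symm
  rw [h1, show Function.minimalPeriod g k - 1 + 1 = Function.minimalPeriod g k
    from Nat.succ_pred_eq_of_pos hp]
  exact Function.iterate_minimalPeriod

private lemma rootOf_update {α : Type*} [DecidableEq α] (k i : α) (f : α → α)
    (_hfi : f i = i) (hreach : ∀ l, ∃ s, f^[s] l = i) :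
    rootOf (Function.update f i k) k = i := by
  classical
  set g := Function.update f i k with hg
  have hag : ∀ x, x ≠ i → f x = g x := fun x hx =>
    (Function.update_of_ne hx k f).symm
  by_cases hik : i = k
  · subst hik
    have hfix : Function.IsFixedPt g i := by
      rw [hg]; exact Function.update_self i i f
    rw [rootOf]
    exact Function.iterate_fixed hfix _
  · have hex := hreach k
    set s := Nat.find hex with hsdef
    have hs : f^[s] k = i := Nat.find_spec hex
    have hmin : ∀ s', s' < s → f^[s'] k ≠ i := fun s' h => Nat.find_min hex h
    have hiter := iter_agree hag hmin
    have hgs : g^[s] k = i := (hiter s le_rfl).trans hs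
    have hper : g^[s + 1] k = k := by
      rw [Function.iterate_succ_apply', hgs]
      exact Function.update_self i k f
    have hperpt : Function.IsPeriodicPt g (s + 1) k := hper
    have hple : Function.minimalPeriod g k ≤ s + 1 :=
      hperpt.minimalPeriod_le (Nat.succ_pos s)
    have hppos : 0 < Function.minimalPeriod g k :=
      hperpt.minimalPeriod_pos (Nat.succ_pos s)
    set p := Function.minimalPeriod g k with hpdef
    have hmod : g^[s % p] k = i := by
      rw [Function.iterate_mod_minimalPeriod_eq]; exact hgs
    have hsle : s % p ≤ s := Nat.mod_le s p
    have hsmod : s % p = s := by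
      by_contra hne
      have hlt : s % p < s := lt_of_le_of_ne hsle hne
      exact hmin _ hlt ((hiter _ hsle).symm.trans hmod)
    have hsp : p = s + 1 := by
      have h1 : s < p := (Nat.mod_eq_iff_lt hppos.ne').mp hsmod
      omega
    rw [rootOf, ← hpdef, hsp]
    simpa using hgs

/-- **Markov tree theorem.** For a real matrix whose rows sum to one, the vector
`w` defined by the sum over spanning trees rooted at `j` of the product of the
matrix entries along the tree edges is a left fixed vector of `M`. -/
theorem markov_tree_theorem (n : ℕ) (hn : 1 ≤ n)
    (M : Matrix (Fin n) (Fin n) ℝ) (hrow : ∀ i, ∑ j, M i j = 1)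
    (w : Fin n → ℝ)
    (hw : ∀ j : Fin n, w j =
      ∑ f ∈ Finset.univ.filter
          (fun f : Fin n → Fin n => f j = j ∧ ∀ i, ∃ t : ℕ, f^[t] i = j),
        ∏ i ∈ Finset.univ.filter (fun i : Fin n => i ≠ j), M i (f i)) :
    ∀ k : Fin n, ∑ i, w i * M i k = w k := by
  classical
  intro k
  set T : Fin n → Finset (Fin n → Fin n) := fun j =>
    Finset.univ.filter
      (fun f : Fin n → Fin n => f j = j ∧ ∀ i, ∃ t : ℕ, f^[t] i = j) with hT
  set G : Finset (Fin n → Fin n) :=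
    Finset.univ.filter (fun g : Fin n → Fin n => ∀ l, ∃ t : ℕ, g^[t] l = k)
    with hGdef
  have hGmem : ∀ {g : Fin n → Fin n}, g ∈ G ↔ ∀ l, ∃ t : ℕ, g^[t] l = k := by
    intro g; simp [hGdef]
  have hTmem : ∀ {j : Fin n} {f : Fin n → Fin n},
      f ∈ T j ↔ f j = j ∧ ∀ i, ∃ t : ℕ, f^[t] i = j := by
    intro j f; simp [hT]
  -- weight identity
  have hweight : ∀ (i v : Fin n) (f : Fin n → Fin n),
      (∏ l ∈ Finset.univ.erase i, M l (f l)) * M i v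
        = ∏ l, M l (Function.update f i v l) := by
    intro i v f
    rw [← Finset.mul_prod_erase Finset.univ
      (fun l => M l (Function.update f i v l)) (Finset.mem_univ i),
      Function.update_self, mul_comm]
    congr 1
    refine Finset.prod_congr rfl fun l hl => ?_
    rw [Function.update_of_ne (Finset.ne_of_mem_erase hl)]
  -- cycle fact for elements of G
  have hcyc : ∀ {g : Fin n → Fin n}, g ∈ G → g (rootOf g k) = k := by
    intro g hg
    obtain ⟨t, ht⟩ := hGmem.mp hg (g k)
    exact rootOf_spec g k ⟨t, by rw [Function.iterate_succ_apply]; exact ht⟩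
  -- second claim: w k equals the sum over G
  have key2 : w k = ∑ g ∈ G, ∏ l, M l (g l) := by
    rw [hw k, Finset.filter_ne']
    have h1 : ∀ f ∈ T k,
        (∏ l ∈ Finset.univ.erase k, M l (f l))
          = ∑ j, (∏ l ∈ Finset.univ.erase k, M l (f l)) * M k j := by
      intro f _
      rw [← Finset.mul_sum, hrow k, mul_one]
    rw [Finset.sum_congr rfl h1, ← Finset.sum_product']
    have hagree : ∀ (f : Fin n → Fin n) (a v x : Fin n), x ≠ a →
        f x = Function.update f a v x := fun f a v x hx =>
      (Function.update_of_ne (β := fun _ => Fin n) hx v f).symm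
    refine Finset.sum_nbij' (i := fun p => Function.update p.1 k p.2)
      (j := fun g => (Function.update g k k, g k)) ?_ ?_ ?_ ?_ ?_
    · rintro ⟨f, j⟩ hp
      obtain ⟨hfk, hreach⟩ := hTmem.mp (Finset.mem_product.mp hp).1
      refine hGmem.mpr fun l => ?_
      exact reach_transfer (hagree f k j) (hreach l)
    · intro g hg
      rw [Finset.mem_product]
      refine ⟨hTmem.mpr ⟨Function.update_self k k g, fun l => ?_⟩,
        Finset.mem_univ _⟩
      exact reach_transfer (hagree g k k) (hGmem.mp hg l)
    · rintro ⟨f, j⟩ hp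
      obtain ⟨hfk, _⟩ := hTmem.mp (Finset.mem_product.mp hp).1
      replace hfk : f k = k := hfk
      show (Function.update (Function.update f k j) k k,
        Function.update f k j k) = (f, j)
      rw [Prod.mk.injEq]
      refine ⟨?_, Function.update_self k j f⟩
      rw [Function.update_idem]
      have h2 := Function.update_eq_self k f
      rw [hfk] at h2
      exact h2
    · intro g hg
      show Function.update (Function.update g k k) k (g k) = g
      rw [Function.update_idem]
      exact Function.update_eq_self k g
    · rintro ⟨f, j⟩ hp
      show (∏ l ∈ Finset.univ.erase k, M l (f l)) * M k j
        = ∏ l, M l (Function.update f k j l)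
      exact hweight k j f
  -- first claim: LHS equals the sum over G
  have key1 : ∑ i, w i * M i k = ∑ g ∈ G, ∏ l, M l (g l) := by
    have hterm : ∀ i : Fin n,
        w i * M i k = ∑ f ∈ T i, ∏ l, M l (Function.update f i k l) := by
      intro i
      rw [hw i, Finset.filter_ne', Finset.sum_mul]
      exact Finset.sum_congr rfl fun f _ => hweight i k f
    rw [Finset.sum_congr rfl fun i _ => hterm i]
    set P : Finset (Fin n × (Fin n → Fin n)) :=
      Finset.univ.filter
        (fun p : Fin n × (Fin n → Fin n) =>
          p.2 p.1 = p.1 ∧ ∀ l, ∃ t : ℕ, p.2^[t] l = p.1) with hPdef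
    have hP : ∀ p : Fin n × (Fin n → Fin n),
        p ∈ P ↔ p.1 ∈ (Finset.univ : Finset (Fin n)) ∧ p.2 ∈ T p.1 := by
      intro p; simp [hPdef, hT]
    have hPmem : ∀ {p : Fin n × (Fin n → Fin n)},
        p ∈ P ↔ p.2 p.1 = p.1 ∧ ∀ l, ∃ t : ℕ, p.2^[t] l = p.1 := by
      intro p; simp [hPdef]
    have hstep :
        (∑ p ∈ P, ∏ l, M l (Function.update p.2 p.1 k l))
          = ∑ i, ∑ f ∈ T i, ∏ l, M l (Function.update f i k l) :=
      Finset.sum_finset_product P Finset.univ (fun i => T i) hP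
    rw [← hstep]
    refine Finset.sum_nbij' (i := fun p => Function.update p.2 p.1 k)
      (j := fun g => (rootOf g k,
        Function.update g (rootOf g k) (rootOf g k))) ?_ ?_ ?_ ?_ ?_
    · rintro ⟨i, f⟩ hp
      obtain ⟨hfi, hreach⟩ := hPmem.mp hp
      replace hreach : ∀ l, ∃ t : ℕ, f^[t] l = i := hreach
      refine hGmem.mpr fun l => ?_
      obtain ⟨s, hs⟩ := reach_transfer
        (fun x hx => (Function.update_of_ne (β := fun _ => Fin n) hx k f).symm)
        (hreach l)
      exact ⟨s + 1, by
        rw [Function.iterate_succ_apply', hs]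
        exact Function.update_self i k f⟩
    · intro g hg
      refine hPmem.mpr ⟨Function.update_self _ _ g, fun l => ?_⟩
      obtain ⟨t, ht⟩ := hGmem.mp hg l
      have hreachr : g^[Function.minimalPeriod g k - 1 + t] l = rootOf g k := by
        rw [Function.iterate_add_apply, ht]; rfl
      exact reach_transfer
        (fun x hx =>
          (Function.update_of_ne (β := fun _ => Fin n) hx (rootOf g k) g).symm)
        ⟨_, hreachr⟩
    · rintro ⟨i, f⟩ hp
      obtain ⟨hfi, hreach⟩ := hPmem.mp hp
      replace hfi : f i = i := hfi
      replace hreach : ∀ l, ∃ t : ℕ, f^[t] l = i := hreach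
      have h1 : rootOf (Function.update f i k) k = i :=
        rootOf_update k i f hfi hreach
      show (rootOf (Function.update f i k) k,
        Function.update (Function.update f i k)
          (rootOf (Function.update f i k) k)
          (rootOf (Function.update f i k) k)) = (i, f)
      rw [Prod.mk.injEq]
      refine ⟨h1, ?_⟩
      rw [h1, Function.update_idem]
      have h2 := Function.update_eq_self i f
      rw [hfi] at h2
      exact h2
    · intro g hg
      show Function.update
        (Function.update g (rootOf g k) (rootOf g k)) (rootOf g k) k = g
      rw [Function.update_idem]
      have h2 := Function.update_eq_self (rootOf g k) g
      rw [hcyc hg] at h2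
      exact h2
    · rintro ⟨i, f⟩ hp
      rfl
  rw [key2]
  exact key1
end

section
/- The two families of one-loop graphs coincide (S₁ = S₂): let n ≥ 2 and fix a root r : Fin n. Define S₁ as the set of all g : Fin n → Fin n such that g r ≠ r and Function.update g r r is a spanning tree rooted at r, and define S₂ as the set of all g : Fin n → Fin n such that there exists k ≠ r with g k = r and Function.update g k k a spanning tree rooted at k. Then S₁ = S₂. -/
/-- Transfer reachability: if `f` and `h` agree off `{r, k}`, `r` can reach `k`
under `h`, and `k` can reach `k` under `h`, then any point that reaches `r`
under `f` reaches `k` under `h`. -/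
lemma reach_transfer_s3 {α : Type*} (f h : α → α) (r k : α)
    (hagree : ∀ x, x ≠ r → x ≠ k → h x = f x)
    (hr : ∃ t, h^[t] r = k) (hk : ∃ t, h^[t] k = k) :
    ∀ s i, f^[s] i = r → ∃ t, h^[t] i = k := by
  intro s
  induction s with
  | zero => intro i hi; simp only [Function.iterate_zero, id] at hi; exact hi ▸ hr
  | succ s ih =>
    intro i hi
    by_cases h1 : i = r
    · exact h1 ▸ hr
    by_cases h2 : i = k
    · exact h2 ▸ hk
    · rw [Function.iterate_succ_apply] at hi
      obtain ⟨t, ht⟩ := ih (f i) hi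
      exact ⟨t + 1, by rw [Function.iterate_succ_apply, hagree i h1 h2, ht]⟩

/-- The two families of one-loop graphs coincide: graphs obtained from a
spanning tree rooted at `r` by adding one edge starting at `r` are exactly the
graphs obtained from a spanning tree rooted at some `k ≠ r` by adding the edge
from `k` to `r`. -/
theorem S1_eq_S2 (n : ℕ) (hn : 2 ≤ n) (r : Fin n) :
    {g : Fin n → Fin n | g r ≠ r ∧
        (Function.update g r r) r = r ∧
        (∀ i : Fin n, ∃ t : ℕ, (Function.update g r r)^[t] i = r)} =
    {g : Fin n → Fin n | ∃ k : Fin n, k ≠ r ∧ g k = r ∧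
        (Function.update g k k) k = k ∧
        (∀ i : Fin n, ∃ t : ℕ, (Function.update g k k)^[t] i = k)} := by
  ext g
  simp only [Set.mem_setOf_eq]
  constructor
  · rintro ⟨hgr, -, hspan⟩
    set f := Function.update g r r with hf
    -- find the minimal time the f-orbit of g r hits r
    have hex : ∃ t, f^[t] (g r) = r := hspan (g r)
    have hmspec : f^[Nat.find hex] (g r) = r := Nat.find_spec hex
    have hm0 : Nat.find hex ≠ 0 := by
      intro h0
      rw [h0] at hmspec; simp at hmspec; exact hgr hmspec
    obtain ⟨m', hms⟩ : ∃ m'', Nat.find hex = m'' + 1 :=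
      ⟨Nat.find hex - 1, (Nat.succ_pred_eq_of_pos (Nat.pos_of_ne_zero hm0)).symm⟩
    rw [hms] at hmspec
    set k := f^[m'] (g r) with hk
    have hkr : k ≠ r := Nat.find_min hex (by omega)
    have hfk : f k = r := by
      rw [Function.iterate_succ_apply'] at hmspec
      rw [hk]; exact hmspec
    have hgk : g k = r := by
      rw [← hfk, hf, Function.update_of_ne hkr]
    set h := Function.update g k k with hh
    have hagree : ∀ x, x ≠ r → x ≠ k → h x = f x := by
      intro x hx1 hx2
      rw [hh, hf, Function.update_of_ne hx2, Function.update_of_ne hx1]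
    -- the f-orbit of g r reaches k under h
    have hB : ∀ d j, j + d = m' → ∃ t, h^[t] (f^[j] (g r)) = k := by
      intro d
      induction d with
      | zero =>
        intro j hj
        obtain rfl : j = m' := by omega
        exact ⟨0, hk.symm⟩
      | succ d ih =>
        intro j hj
        have hjm : j < m' := by omega
        set x := f^[j] (g r) with hx
        have hx1 : x ≠ r := Nat.find_min hex (by omega)
        have hx2 : x ≠ k := by
          intro hxe
          have : f^[j + 1] (g r) = r := by
            rw [Function.iterate_succ_apply', ← hx, hxe, hfk]
          exact absurd this (Nat.find_min hex (by omega))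
        obtain ⟨t, ht⟩ := ih (j + 1) (by omega)
        refine ⟨t + 1, ?_⟩
        rw [Function.iterate_succ_apply, hagree x hx1 hx2]
        show h^[t] (f (f^[j] (g r))) = k
        rw [← Function.iterate_succ_apply' f j (g r)]
        exact ht
    obtain ⟨t₀, ht₀⟩ := hB m' 0 (by omega)
    simp only [Function.iterate_zero, id] at ht₀
    have hC : ∃ t, h^[t] r = k := by
      refine ⟨t₀ + 1, ?_⟩
      rw [Function.iterate_succ_apply, hh, Function.update_of_ne (Ne.symm hkr), ht₀]
    refine ⟨k, hkr, hgk, Function.update_self _ _ _, ?_⟩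
    intro i
    obtain ⟨s, hs⟩ := hspan i
    exact reach_transfer_s3 f h r k hagree hC ⟨0, rfl⟩ s i hs
  · rintro ⟨k, hkr, hgk, -, hspan⟩
    set h := Function.update g k k with hh
    set f := Function.update g r r with hf
    have hgr : g r ≠ r := by
      intro habs
      obtain ⟨t, ht⟩ := hspan r
      have : h r = r := by rw [hh, Function.update_of_ne (Ne.symm hkr), habs]
      rw [Function.iterate_fixed this] at ht
      exact hkr ht.symm
    refine ⟨hgr, Function.update_self _ _ _, ?_⟩
    have hagree : ∀ x, x ≠ k → x ≠ r → f x = h x := by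
      intro x hx1 hx2
      rw [hh, hf, Function.update_of_ne hx2, Function.update_of_ne hx1]
    have hfk : f k = r := by rw [hf, Function.update_of_ne hkr, hgk]
    intro i
    obtain ⟨s, hs⟩ := hspan i
    exact reach_transfer_s3 h f k r hagree ⟨1, by simpa using hfk⟩ ⟨0, rfl⟩ s i hs
end

section
/- Positivity of the tree-formula weights: let n ≥ 1 and let M : Matrix (Fin n) (Fin n) ℝ have nonnegative entries. Define w : Fin n → ℝ by w j = ∑_{f ∈ T j} ∏_{i ≠ j} M i (f i), where T j is the set of spanning trees rooted at j. Then for every k : Fin n, w k > 0 if and only if every state can reach k, i.e. for every i : Fin n one has Relation.ReflTransGen (fun a b => 0 < M a b) i k. -/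
open scoped Classical

/-- `Steps n M k m i` : there is a chain of `m` positive edges from `i` to `k`. -/
def Steps (n : ℕ) (M : Matrix (Fin n) (Fin n) ℝ) (k : Fin n) : ℕ → Fin n → Prop
  | 0, i => i = k
  | (m+1), i => ∃ b, 0 < M i b ∧ Steps n M k m b

lemma steps_of_reach {n : ℕ} {M : Matrix (Fin n) (Fin n) ℝ} {k i : Fin n}
    (h : Relation.ReflTransGen (fun a b => 0 < M a b) i k) :
    ∃ m, Steps n M k m i := by
  induction h using Relation.ReflTransGen.head_induction_on with
  | refl => exact ⟨0, rfl⟩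
  | head hab _ ih =>
    obtain ⟨m, hm⟩ := ih
    exact ⟨m + 1, _, hab, hm⟩

lemma reach_of_iter {n : ℕ} {M : Matrix (Fin n) (Fin n) ℝ} {k : Fin n} {f : Fin n → Fin n}
    (hpos : ∀ i, i ≠ k → 0 < M i (f i)) :
    ∀ t i, f^[t] i = k → Relation.ReflTransGen (fun a b => 0 < M a b) i k := by
  intro t
  induction t with
  | zero => intro i h; simp only [Function.iterate_zero, id] at h; subst h; exact .refl
  | succ t ih =>
    intro i h
    by_cases hik : i = k
    · subst hik; exact .refl
    · rw [Function.iterate_succ_apply] at h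
      exact Relation.ReflTransGen.head (hpos i hik) (ih (f i) h)

/-- Positivity of the tree-formula weights: for a matrix with nonnegative
entries, the tree-formula weight `w k` is positive iff every state can reach
`k` in the directed graph of positive entries of `M`. -/
theorem tree_weight_pos_iff (n : ℕ) (hn : 1 ≤ n)
    (M : Matrix (Fin n) (Fin n) ℝ) (hM : ∀ i j, 0 ≤ M i j)
    (w : Fin n → ℝ)
    (hw : ∀ j : Fin n, w j =
      ∑ f ∈ Finset.univ.filter
          (fun f : Fin n → Fin n => f j = j ∧ ∀ i, ∃ t : ℕ, f^[t] i = j),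
        ∏ i ∈ Finset.univ.filter (fun i : Fin n => i ≠ j), M i (f i)) :
    ∀ k : Fin n, 0 < w k ↔
      ∀ i : Fin n, Relation.ReflTransGen (fun a b => 0 < M a b) i k := by
  intro k
  rw [hw k]
  constructor
  · intro hpos i
    have hex : ∃ f ∈ Finset.univ.filter
        (fun f : Fin n → Fin n => f k = k ∧ ∀ i, ∃ t : ℕ, f^[t] i = k),
        (∏ i ∈ Finset.univ.filter (fun i : Fin n => i ≠ k), M i (f i)) ≠ 0 := by
      by_contra h
      push_neg at h
      rw [Finset.sum_eq_zero h] at hpos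
      exact lt_irrefl 0 hpos
    obtain ⟨f, hf, hne⟩ := hex
    rw [Finset.mem_filter] at hf
    obtain ⟨-, hfk, hiter⟩ := hf
    have hposf : ∀ j, j ≠ k → 0 < M j (f j) := by
      intro j hj
      have hjne := Finset.prod_ne_zero_iff.mp hne j (by simp [hj])
      exact lt_of_le_of_ne (hM j (f j)) (Ne.symm hjne)
    obtain ⟨t, ht⟩ := hiter i
    exact reach_of_iter hposf t i ht
  · intro hreach
    have hS : ∀ i, ∃ m, Steps n M k m i := fun i => steps_of_reach (hreach i)
    have hdstep : ∀ i, i ≠ k → ∃ b, 0 < M i b ∧ Nat.find (hS b) < Nat.find (hS i) := by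
      intro i hik
      have hd := Nat.find_spec (hS i)
      cases hm : Nat.find (hS i) with
      | zero =>
        rw [hm] at hd
        exact absurd hd hik
      | succ m =>
        rw [hm] at hd
        obtain ⟨b, hb, hsb⟩ := hd
        refine ⟨b, hb, ?_⟩
        have hle : Nat.find (hS b) ≤ m := Nat.find_le hsb
        omega
    choose g hg1 hg2 using hdstep
    set f : Fin n → Fin n := fun i => if h : i = k then k else g i h with hfdef
    have hfk : f k = k := dif_pos rfl
    have hfi : ∀ i (h : i ≠ k), f i = g i h := fun i h => dif_neg h
    have hiter : ∀ m i, Nat.find (hS i) < m → ∃ t, f^[t] i = k := by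
      intro m
      induction m with
      | zero => intro i h; omega
      | succ m ih =>
        intro i h
        by_cases hik : i = k
        · exact ⟨0, by simp [hik]⟩
        · obtain ⟨t, ht⟩ := ih (g i hik) (by have := hg2 i hik; omega)
          refine ⟨t + 1, ?_⟩
          rw [Function.iterate_succ_apply, hfi i hik]
          exact ht
    have hmem : f ∈ Finset.univ.filter
        (fun f : Fin n → Fin n => f k = k ∧ ∀ i, ∃ t : ℕ, f^[t] i = k) := by
      rw [Finset.mem_filter]
      exact ⟨Finset.mem_univ f, hfk, fun i => hiter (Nat.find (hS i) + 1) i (Nat.lt_succ_self _)⟩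
    apply Finset.sum_pos'
    · intro x _
      exact Finset.prod_nonneg fun j _ => hM _ _
    · refine ⟨f, hmem, Finset.prod_pos ?_⟩
      intro j hj
      rw [Finset.mem_filter] at hj
      rw [hfi j hj.2]
      exact hg1 j hj.2
end

section
/- Vanishing of the tree-formula vector characterizes non-uniqueness: let n ≥ 3 and let M : Matrix (Fin n) (Fin n) ℝ be a stochastic matrix (all entries nonnegative and every row sums to 1). Define w : Fin n → ℝ by w j = ∑_{f ∈ T j} ∏_{i ≠ j} M i (f i), where T j is the set of spanning trees rooted at j. Then w = 0 (i.e. w j = 0 for all j) if and only if the invariant probability measure of M is not unique, i.e. there exist two distinct vectors v₁ ≠ v₂ in ℝ^n, each with nonnegative entries summing to 1 and satisfying ∑_i v h i * M i k = v h k for all k. -/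
open scoped Classical

/-- Positive part of an invariant vector of a stochastic matrix is invariant. -/
private lemma stoch_posPart_invariant {n : ℕ} {M : Matrix (Fin n) (Fin n) ℝ}
    (hM : ∀ i j, 0 ≤ M i j) (hrow : ∀ i, ∑ j, M i j = 1)
    {u : Fin n → ℝ} (hu : ∀ k, ∑ i, u i * M i k = u k) :
    ∀ k, ∑ i, max (u i) 0 * M i k = max (u k) 0 := by
  set p : Fin n → ℝ := fun i => max (u i) 0 with hp
  have hle : ∀ k, p k ≤ ∑ i, p i * M i k := by
    intro k
    have h0 : 0 ≤ ∑ i, p i * M i k :=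
      Finset.sum_nonneg fun i _ => mul_nonneg (le_max_right _ _) (hM i k)
    have h1 : u k ≤ ∑ i, p i * M i k := by
      rw [← hu k]
      exact Finset.sum_le_sum fun i _ =>
        mul_le_mul_of_nonneg_right (le_max_left _ _) (hM i k)
    exact max_le h1 h0
  have hsum : ∑ k, ∑ i, p i * M i k = ∑ k, p k := by
    rw [Finset.sum_comm]
    simp_rw [← Finset.mul_sum, hrow, mul_one]
  intro k
  by_contra hne
  have hlt : p k < ∑ i, p i * M i k := lt_of_le_of_ne (hle k) (fun h => hne h.symm)
  have : ∑ x, p x < ∑ x, ∑ i, p i * M i x :=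
    Finset.sum_lt_sum (fun i _ => hle i) ⟨k, Finset.mem_univ k, hlt⟩
  linarith

/-- Positivity propagates along positive-probability reachability. -/
private lemma reach_pos {n : ℕ} {M : Matrix (Fin n) (Fin n) ℝ}
    (hM : ∀ i j, 0 ≤ M i j)
    {v : Fin n → ℝ} (hvnn : ∀ i, 0 ≤ v i)
    (hv : ∀ k, ∑ i, v i * M i k = v k)
    {i j : Fin n} (hreach : Relation.ReflTransGen (fun a b => 0 < M a b) i j)
    (hi : 0 < v i) : 0 < v j := by
  induction hreach with
  | refl => exact hi
  | @tail b c hab hbc ih =>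
    have hle : v b * M b c ≤ ∑ x, v x * M x c :=
      Finset.single_le_sum (fun x _ => mul_nonneg (hvnn x) (hM x c)) (Finset.mem_univ b)
    have := hv c
    nlinarith [mul_pos ih hbc]

/-- A tree rooted at `j` with positive edges gives reachability. -/
private lemma iterate_reach {n : ℕ} {M : Matrix (Fin n) (Fin n) ℝ}
    {f : Fin n → Fin n} {j : Fin n}
    (hf : ∀ i, i ≠ j → 0 < M i (f i)) :
    ∀ t i, f^[t] i = j → Relation.ReflTransGen (fun a b => 0 < M a b) i j := by
  intro t
  induction t with
  | zero =>
    intro i h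
    simp only [Function.iterate_zero, id] at h
    exact h ▸ Relation.ReflTransGen.refl
  | succ t ih =>
    intro i h
    by_cases hij : i = j
    · exact hij ▸ Relation.ReflTransGen.refl
    · have h' : f^[t] (f i) = j := by rw [← Function.iterate_succ_apply]; exact h
      exact Relation.ReflTransGen.head (hf i hij) (ih _ h')

/-- Existence of a "final" state reachable from `i0`. -/
private lemma exists_final {n : ℕ} {M : Matrix (Fin n) (Fin n) ℝ} (i0 : Fin n) :
    ∃ b, Relation.ReflTransGen (fun a b => 0 < M a b) i0 b ∧
      ∀ x, Relation.ReflTransGen (fun a b => 0 < M a b) b x →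
        Relation.ReflTransGen (fun a b => 0 < M a b) x b := by
  classical
  set R : Fin n → Fin n → Prop := Relation.ReflTransGen (fun a b => 0 < M a b) with hR
  set F : Fin n → ℕ := fun a => (Finset.univ.filter (fun x => R a x)).card with hF
  obtain ⟨b, hb, hmin⟩ := Finset.exists_min_image
    (Finset.univ.filter (fun x => R i0 x)) F
    ⟨i0, by simp only [Finset.mem_filter, Finset.mem_univ, true_and]
            exact Relation.ReflTransGen.refl⟩
  have hib : R i0 b := (Finset.mem_filter.mp hb).2
  refine ⟨b, hib, ?_⟩
  intro x hbx
  by_contra hxb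
  have hsub : (Finset.univ.filter (fun y => R x y)) ⊂ (Finset.univ.filter (fun y => R b y)) := by
    refine Finset.ssubset_iff_of_subset ?_ |>.mpr ?_
    · intro y hy
      simp only [Finset.mem_filter, Finset.mem_univ, true_and] at hy ⊢
      exact hbx.trans hy
    · refine ⟨b, ?_, ?_⟩
      · simp only [Finset.mem_filter, Finset.mem_univ, true_and]
        exact Relation.ReflTransGen.refl
      · simp only [Finset.mem_filter, Finset.mem_univ, true_and]
        exact hxb
  have hcard : F x < F b := Finset.card_lt_card hsub
  have hx : x ∈ Finset.univ.filter (fun y => R i0 y) := by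
    simp only [Finset.mem_filter, Finset.mem_univ, true_and]
    exact hib.trans hbx
  exact absurd (hmin x hx) (by omega)

/-- Every stochastic matrix has an invariant probability vector. -/
private lemma exists_invariant {n : ℕ} (hn : 0 < n) {M : Matrix (Fin n) (Fin n) ℝ}
    (hM : ∀ i j, 0 ≤ M i j) (hrow : ∀ i, ∑ j, M i j = 1) :
    ∃ v : Fin n → ℝ, (∀ i, 0 ≤ v i) ∧ (∑ i, v i = 1) ∧ ∀ k, ∑ i, v i * M i k = v k := by
  classical
  have : Nonempty (Fin n) := ⟨⟨0, hn⟩⟩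
  have hdet : (M - 1).det = 0 := by
    rw [← Matrix.exists_mulVec_eq_zero_iff]
    refine ⟨fun _ => 1, ?_, ?_⟩
    · intro h
      have := congrFun h ⟨0, hn⟩
      norm_num at this
    · funext i
      simp only [Matrix.mulVec, dotProduct, Matrix.sub_apply, Matrix.one_apply,
        mul_one, Pi.zero_apply]
      rw [Finset.sum_sub_distrib, hrow i]
      simp
  have hdetT : (M.transpose - 1).det = 0 := by
    have h1 : (M.transpose - 1) = (M - 1).transpose := by
      rw [Matrix.transpose_sub, Matrix.transpose_one]
    rw [h1, Matrix.det_transpose]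
    exact hdet
  obtain ⟨u, hu0, huv⟩ := (Matrix.exists_mulVec_eq_zero_iff).mpr hdetT
  have hu : ∀ k, ∑ i, u i * M i k = u k := by
    intro k
    have h2 := congrFun huv k
    simp only [Matrix.mulVec, dotProduct, Matrix.sub_apply, Matrix.transpose_apply,
      sub_mul, Finset.sum_sub_distrib, Matrix.one_apply, Pi.zero_apply] at h2
    have h1 : ∑ i, (if k = i then (1:ℝ) else 0) * u i = u k := by simp
    rw [h1] at h2
    rw [← sub_eq_zero.mp h2]
    exact Finset.sum_congr rfl fun i _ => mul_comm _ _
  have hex : ∃ p : Fin n → ℝ, (∀ i, 0 ≤ p i) ∧ (∃ i, 0 < p i) ∧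
      ∀ k, ∑ i, p i * M i k = p k := by
    by_cases hpos : ∃ i, 0 < u i
    · obtain ⟨i, hi⟩ := hpos
      exact ⟨fun i => max (u i) 0, fun i => le_max_right _ _, ⟨i, lt_max_iff.mpr (Or.inl hi)⟩,
        stoch_posPart_invariant hM hrow hu⟩
    · push_neg at hpos
      obtain ⟨i, hi⟩ := Function.ne_iff.mp hu0
      refine ⟨fun i => -u i, fun i => by simpa using hpos i, ⟨i, ?_⟩, ?_⟩
      · have h3 : u i < 0 := lt_of_le_of_ne (hpos i) hi
        show 0 < -u i
        linarith
      · intro k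
        simp only [neg_mul]
        rw [Finset.sum_neg_distrib, hu k]
  obtain ⟨p, hpnn, ⟨i, hpi⟩, hpinv⟩ := hex
  set S : ℝ := ∑ i, p i with hS
  have hSpos : 0 < S :=
    lt_of_lt_of_le hpi (Finset.single_le_sum (fun j _ => hpnn j) (Finset.mem_univ i))
  refine ⟨fun i => p i / S, fun i => div_nonneg (hpnn i) hSpos.le, ?_, ?_⟩
  · rw [← Finset.sum_div, ← hS, div_self hSpos.ne']
  · intro k
    simp only [div_mul_eq_mul_div]
    rw [← Finset.sum_div, hpinv k]

/-- Invariant probability vector supported inside a closed set. -/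
private lemma exists_invariant_on {n : ℕ} (hn : 0 < n) {M : Matrix (Fin n) (Fin n) ℝ}
    (hM : ∀ i j, 0 ≤ M i j) (hrow : ∀ i, ∑ j, M i j = 1)
    (S : Finset (Fin n)) (a : Fin n) (ha : a ∈ S)
    (hclosed : ∀ i ∈ S, ∀ j, 0 < M i j → j ∈ S) :
    ∃ v : Fin n → ℝ, (∀ i, 0 ≤ v i) ∧ (∑ i, v i = 1) ∧ (∀ k, ∑ i, v i * M i k = v k) ∧
      ∀ i, i ∉ S → v i = 0 := by
  classical
  set M' : Matrix (Fin n) (Fin n) ℝ :=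
    fun i j => if i ∈ S then M i j else (if j = a then 1 else 0) with hM'
  have hM'nn : ∀ i j, 0 ≤ M' i j := by
    intro i j
    simp only [hM']
    split
    · exact hM i j
    · split <;> norm_num
  have hM'row : ∀ i, ∑ j, M' i j = 1 := by
    intro i
    by_cases hi : i ∈ S
    · simp only [hM', if_pos hi]
      exact hrow i
    · simp only [hM', if_neg hi]
      simp
  obtain ⟨v, hvnn, hvsum, hvinv⟩ := exists_invariant hn hM'nn hM'row
  have hmass : ∀ i, ∑ k ∈ S, M' i k = 1 := by
    intro i
    by_cases hi : i ∈ S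
    · simp only [hM', if_pos hi]
      rw [show ∑ k ∈ S, M i k = ∑ k, M i k from Finset.sum_subset (Finset.subset_univ S)
        (fun x _ hx => by
          by_contra hne
          exact hx (hclosed i hi x (lt_of_le_of_ne (hM i x) (Ne.symm hne))))]
      exact hrow i
    · simp only [hM', if_neg hi]
      simp [ha]
  have hsupp : ∑ k ∈ S, v k = 1 := by
    calc ∑ k ∈ S, v k = ∑ k ∈ S, ∑ i, v i * M' i k :=
          Finset.sum_congr rfl fun k _ => (hvinv k).symm
      _ = ∑ i, ∑ k ∈ S, v i * M' i k := Finset.sum_comm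
      _ = ∑ i, v i := by
          refine Finset.sum_congr rfl fun i _ => ?_
          rw [← Finset.mul_sum, hmass i, mul_one]
      _ = 1 := hvsum
  have hzero : ∀ i, i ∉ S → v i = 0 := by
    have hcompl : ∑ k ∈ Finset.univ \ S, v k = 0 := by
      rw [Finset.sum_sdiff_eq_sub (Finset.subset_univ S), hvsum, hsupp, sub_self]
    intro i hi
    exact (Finset.sum_eq_zero_iff_of_nonneg (fun x _ => hvnn x)).mp hcompl i
      (Finset.mem_sdiff.mpr ⟨Finset.mem_univ i, hi⟩)
  refine ⟨v, hvnn, hvsum, ?_, hzero⟩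
  intro k
  rw [← hvinv k]
  refine Finset.sum_congr rfl fun i _ => ?_
  by_cases hi : i ∈ S
  · simp only [hM', if_pos hi]
  · rw [hzero i hi, zero_mul, zero_mul]

private noncomputable def reachSet {n : ℕ} (M : Matrix (Fin n) (Fin n) ℝ) (a : Fin n) :
    ℕ → Finset (Fin n)
  | 0 => {a}
  | t + 1 => reachSet M a t ∪ Finset.univ.filter (fun i => ∃ j ∈ reachSet M a t, 0 < M i j)

private lemma mem_reachSet_of_reach {n : ℕ} {M : Matrix (Fin n) (Fin n) ℝ} {a i : Fin n}
    (h : Relation.ReflTransGen (fun x y => 0 < M x y) i a) :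
    ∃ t, i ∈ reachSet M a t := by
  induction h using Relation.ReflTransGen.head_induction_on with
  | refl => exact ⟨0, by simp [reachSet]⟩
  | head hxc _ ih =>
    obtain ⟨t, ht⟩ := ih
    exact ⟨t + 1, by
      simp only [reachSet, Finset.mem_union, Finset.mem_filter, Finset.mem_univ, true_and]
      exact Or.inr ⟨_, ht, hxc⟩⟩

/-- If every state reaches `j`, there is a spanning tree rooted at `j` with positive edges. -/
private lemma exists_tree {n : ℕ} {M : Matrix (Fin n) (Fin n) ℝ} {j : Fin n}
    (hall : ∀ i, Relation.ReflTransGen (fun x y => 0 < M x y) i j) :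
    ∃ f : Fin n → Fin n, f j = j ∧ (∀ i, ∃ t : ℕ, f^[t] i = j) ∧
      ∀ i, i ≠ j → 0 < M i (f i) := by
  classical
  have E : ∀ i, ∃ t, i ∈ reachSet M j t := fun i => mem_reachSet_of_reach (hall i)
  set d : Fin n → ℕ := fun i => Nat.find (E i) with hd
  have hdspec : ∀ i, i ∈ reachSet M j (d i) := fun i => Nat.find_spec (E i)
  have hd0 : ∀ i, i ≠ j → d i ≠ 0 := by
    intro i hij h0
    have := hdspec i
    rw [h0] at this
    simp [reachSet] at this
    exact hij this
  have hex : ∀ i, i ≠ j → ∃ jj, jj ∈ reachSet M j (d i - 1) ∧ 0 < M i jj := by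
    intro i hij
    have h0 := hd0 i hij
    obtain ⟨t, ht⟩ : ∃ t, d i = t + 1 := ⟨d i - 1, by omega⟩
    have hmem := hdspec i
    rw [ht] at hmem
    simp only [reachSet, Finset.mem_union, Finset.mem_filter, Finset.mem_univ, true_and] at hmem
    have hnot : i ∉ reachSet M j t := by
      intro hc
      have hle : d i ≤ t := Nat.find_le hc
      omega
    rcases hmem with hc | ⟨jj, hjj, hpos⟩
    · exact absurd hc hnot
    · exact ⟨jj, by rw [ht]; simpa using hjj, hpos⟩
  set f : Fin n → Fin n := fun i =>
    if h : i = j then j else Classical.choose (hex i h) with hf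
  have hfj : f j = j := by simp [hf]
  have hstep : ∀ i, i ≠ j → 0 < M i (f i) := by
    intro i hij
    simp only [hf, dif_neg hij]
    exact (Classical.choose_spec (hex i hij)).2
  have hdec : ∀ i, i ≠ j → d (f i) < d i := by
    intro i hij
    have hmem : f i ∈ reachSet M j (d i - 1) := by
      simp only [hf, dif_neg hij]
      exact (Classical.choose_spec (hex i hij)).1
    have hle : d (f i) ≤ d i - 1 := Nat.find_le hmem
    have := hd0 i hij
    omega
  refine ⟨f, hfj, ?_, hstep⟩
  have hspan : ∀ t i, d i ≤ t → ∃ s, f^[s] i = j := by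
    intro t
    induction t with
    | zero =>
      intro i hi
      have h0 : d i = 0 := Nat.le_zero.mp hi
      have := hdspec i
      rw [h0] at this
      simp [reachSet] at this
      exact ⟨0, by simp [this]⟩
    | succ t ih =>
      intro i hi
      by_cases hij : i = j
      · exact ⟨0, by simp [hij]⟩
      · obtain ⟨s, hs⟩ := ih (f i) (by have := hdec i hij; omega)
        exact ⟨s + 1, by rw [Function.iterate_succ_apply]; exact hs⟩
  exact fun i => hspan (d i) i le_rfl

/-- Vanishing of the tree-formula vector characterizes non-uniqueness of the
invariant probability measure of a stochastic matrix (for `n ≥ 3`). -/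
theorem tree_vector_zero_iff_not_unique (n : ℕ) (hn : 3 ≤ n)
    (M : Matrix (Fin n) (Fin n) ℝ)
    (hM : ∀ i j, 0 ≤ M i j) (hrow : ∀ i, ∑ j, M i j = 1)
    (w : Fin n → ℝ)
    (hw : ∀ j : Fin n, w j =
      ∑ f ∈ Finset.univ.filter
          (fun f : Fin n → Fin n => f j = j ∧ ∀ i, ∃ t : ℕ, f^[t] i = j),
        ∏ i ∈ Finset.univ.filter (fun i : Fin n => i ≠ j), M i (f i)) :
    (∀ j : Fin n, w j = 0) ↔
      ∃ v₁ v₂ : Fin n → ℝ, v₁ ≠ v₂ ∧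
        (∀ i, 0 ≤ v₁ i) ∧ (∑ i, v₁ i = 1) ∧ (∀ k, ∑ i, v₁ i * M i k = v₁ k) ∧
        (∀ i, 0 ≤ v₂ i) ∧ (∑ i, v₂ i = 1) ∧ (∀ k, ∑ i, v₂ i * M i k = v₂ k) := by
  classical
  have hn0 : 0 < n := by omega
  constructor
  · -- w = 0 → non-uniqueness
    intro h
    -- Step A: for each j, some state does not reach j
    have hnr : ∀ j : Fin n, ∃ i, ¬ Relation.ReflTransGen (fun a b => 0 < M a b) i j := by
      intro j
      by_contra hc
      push_neg at hc
      obtain ⟨f, hfj, hspan, hstep⟩ := exists_tree hc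
      have hmemf : f ∈ Finset.univ.filter
          (fun f : Fin n → Fin n => f j = j ∧ ∀ i, ∃ t : ℕ, f^[t] i = j) :=
        Finset.mem_filter.mpr ⟨Finset.mem_univ f, hfj, hspan⟩
      have hprodpos : 0 < ∏ i ∈ Finset.univ.filter (fun i : Fin n => i ≠ j), M i (f i) :=
        Finset.prod_pos fun i hi => hstep i (Finset.mem_filter.mp hi).2
      have hle : (∏ i ∈ Finset.univ.filter (fun i : Fin n => i ≠ j), M i (f i)) ≤ w j := by
        rw [hw j]
        exact Finset.single_le_sum
          (fun g _ => Finset.prod_nonneg fun i _ => hM i (g i)) hmemf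
      have := h j
      linarith
    -- a final state
    obtain ⟨a, -, hafin⟩ := exists_final (M := M) ⟨0, hn0⟩
    obtain ⟨i₀, hi₀⟩ := hnr a
    obtain ⟨b, hib, hbfin⟩ := exists_final (M := M) i₀
    set S₁ : Finset (Fin n) :=
      Finset.univ.filter (fun x => Relation.ReflTransGen (fun p q => 0 < M p q) a x) with hS₁
    set S₂ : Finset (Fin n) :=
      Finset.univ.filter (fun x => Relation.ReflTransGen (fun p q => 0 < M p q) b x) with hS₂
    have haS₁ : a ∈ S₁ := by
      simp only [hS₁, Finset.mem_filter, Finset.mem_univ, true_and]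
      exact Relation.ReflTransGen.refl
    have hbS₂ : b ∈ S₂ := by
      simp only [hS₂, Finset.mem_filter, Finset.mem_univ, true_and]
      exact Relation.ReflTransGen.refl
    have hclosed₁ : ∀ i ∈ S₁, ∀ j, 0 < M i j → j ∈ S₁ := by
      intro i hi j hj
      simp only [hS₁, Finset.mem_filter, Finset.mem_univ, true_and] at hi ⊢
      exact hi.tail hj
    have hclosed₂ : ∀ i ∈ S₂, ∀ j, 0 < M i j → j ∈ S₂ := by
      intro i hi j hj
      simp only [hS₂, Finset.mem_filter, Finset.mem_univ, true_and] at hi ⊢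
      exact hi.tail hj
    have hdisj : ∀ x, x ∈ S₁ → x ∈ S₂ → False := by
      intro x hx1 hx2
      simp only [hS₁, Finset.mem_filter, Finset.mem_univ, true_and] at hx1
      simp only [hS₂, Finset.mem_filter, Finset.mem_univ, true_and] at hx2
      have hxb := hbfin x hx2
      have hab := hx1.trans hxb
      have hba := hafin b hab
      exact hi₀ (hib.trans hba)
    obtain ⟨v₁, h1n, h1s, h1i, h1z⟩ := exists_invariant_on hn0 hM hrow S₁ a haS₁ hclosed₁
    obtain ⟨v₂, h2n, h2s, h2i, h2z⟩ := exists_invariant_on hn0 hM hrow S₂ b hbS₂ hclosed₂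
    refine ⟨v₁, v₂, ?_, h1n, h1s, h1i, h2n, h2s, h2i⟩
    intro heq
    have h1' : ∑ k ∈ S₁, v₁ k = 1 := by
      rw [show ∑ k ∈ S₁, v₁ k = ∑ k, v₁ k from
        Finset.sum_subset (Finset.subset_univ S₁) (fun x _ hx => h1z x hx)]
      exact h1s
    have h2' : ∑ k ∈ S₁, v₂ k = 0 :=
      Finset.sum_eq_zero fun k hk => h2z k (fun hk2 => hdisj k hk hk2)
    rw [heq, h2'] at h1'
    norm_num at h1'
  · -- non-uniqueness → w = 0
    rintro ⟨v₁, v₂, hne, h1n, h1s, h1i, h2n, h2s, h2i⟩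
    intro j
    by_contra hwj
    -- some tree with nonzero (hence positive) product
    have hexf : ∃ f ∈ Finset.univ.filter
        (fun f : Fin n → Fin n => f j = j ∧ ∀ i, ∃ t : ℕ, f^[t] i = j),
        (∏ i ∈ Finset.univ.filter (fun i : Fin n => i ≠ j), M i (f i)) ≠ 0 := by
      by_contra hc
      push_neg at hc
      exact hwj ((hw j).trans (Finset.sum_eq_zero hc))
    obtain ⟨f, hfmem, hfprod⟩ := hexf
    obtain ⟨-, hfj, hspan⟩ : f ∈ Finset.univ ∧ f j = j ∧ ∀ i, ∃ t : ℕ, f^[t] i = j := by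
      simpa [Finset.mem_filter] using hfmem
    have hstep : ∀ i, i ≠ j → 0 < M i (f i) := by
      intro i hij
      have hne0 : M i (f i) ≠ 0 := by
        refine Finset.prod_ne_zero_iff.mp hfprod i ?_
        simp [hij]
      exact lt_of_le_of_ne (hM i (f i)) (Ne.symm hne0)
    have hall : ∀ i, Relation.ReflTransGen (fun a b => 0 < M a b) i j := by
      intro i
      obtain ⟨t, ht⟩ := hspan i
      exact iterate_reach hstep t i ht
    -- difference of the two invariant vectors
    set u : Fin n → ℝ := fun i => v₁ i - v₂ i with hu
    have huinv : ∀ k, ∑ i, u i * M i k = u k := by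
      intro k
      simp only [hu, sub_mul]
      rw [Finset.sum_sub_distrib, h1i k, h2i k]
    have hvinv : ∀ k, ∑ i, (-u) i * M i k = (-u) k := by
      intro k
      simp only [Pi.neg_apply, neg_mul]
      rw [Finset.sum_neg_distrib, huinv k]
    set p : Fin n → ℝ := fun i => max (u i) 0 with hp
    set q : Fin n → ℝ := fun i => max (-u i) 0 with hq
    have hpinv : ∀ k, ∑ i, p i * M i k = p k :=
      stoch_posPart_invariant hM hrow huinv
    have hqinv : ∀ k, ∑ i, q i * M i k = q k := by
      have := stoch_posPart_invariant hM hrow hvinv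
      simpa [hq] using this
    have hpnn : ∀ i, 0 ≤ p i := fun i => le_max_right _ _
    have hqnn : ∀ i, 0 ≤ q i := fun i => le_max_right _ _
    have hpq : ∀ i, p i - q i = u i := by
      intro i
      simp only [hp, hq, max_def]
      split_ifs <;> simp_all <;> linarith
    have hsum0 : ∑ i, u i = 0 := by
      simp only [hu]
      rw [Finset.sum_sub_distrib, h1s, h2s, sub_self]
    have hSeq : ∑ i, p i = ∑ i, q i := by
      have h1 : ∑ i, (p i - q i) = 0 := by
        rw [Finset.sum_congr rfl fun i _ => hpq i]
        exact hsum0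
      rw [Finset.sum_sub_distrib] at h1
      linarith
    obtain ⟨i, hi⟩ := Function.ne_iff.mp hne
    have hui : u i ≠ 0 := sub_ne_zero.mpr hi
    have hSpos : 0 < ∑ i, p i := by
      rcases lt_or_gt_of_ne hui with hlt | hgt
      · rw [hSeq]
        have : 0 < q i := by
          simp only [hq]
          exact lt_max_iff.mpr (Or.inl (by linarith))
        exact lt_of_lt_of_le this (Finset.single_le_sum (fun x _ => hqnn x) (Finset.mem_univ i))
      · have : 0 < p i := by
          simp only [hp]
          exact lt_max_iff.mpr (Or.inl hgt)
        exact lt_of_lt_of_le this (Finset.single_le_sum (fun x _ => hpnn x) (Finset.mem_univ i))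
    have hQpos : 0 < ∑ i, q i := hSeq ▸ hSpos
    have hpex : ∃ x, 0 < p x := by
      by_contra hc
      push_neg at hc
      have : ∑ x, p x = 0 := Finset.sum_eq_zero fun x _ => le_antisymm (hc x) (hpnn x)
      linarith
    have hqex : ∃ x, 0 < q x := by
      by_contra hc
      push_neg at hc
      have : ∑ x, q x = 0 := Finset.sum_eq_zero fun x _ => le_antisymm (hc x) (hqnn x)
      linarith
    obtain ⟨x₁, hx₁⟩ := hpex
    obtain ⟨x₂, hx₂⟩ := hqex
    have hpj : 0 < p j := reach_pos hM hpnn hpinv (hall x₁) hx₁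
    have hqj : 0 < q j := reach_pos hM hqnn hqinv (hall x₂) hx₂
    have huj1 : 0 < u j := by
      rcases lt_max_iff.mp hpj with h' | h'
      · exact h'
      · norm_num at h'
    have huj2 : 0 < -u j := by
      rcases lt_max_iff.mp hqj with h' | h'
      · exact h'
      · norm_num at h'
    linarith
end

section
/- Invariant measures vanish on non-recurrent states: let N ≥ 1 and let M : Matrix (Fin N) (Fin N) ℝ be a stochastic matrix (all entries nonnegative and every row sums to 1). Let v : Fin N → ℝ be an invariant probability measure of M (0 ≤ v, ∑ i, v i = 1, and ∑ i, v i * M i k = v k for all k). If a state i : Fin N can reach some state j : Fin N from which i cannot be reached, i.e. Relation.ReflTransGen (fun a b => 0 < M a b) i j holds but Relation.ReflTransGen (fun a b => 0 < M a b) j i fails, then v i = 0. -/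
/-- Invariant probability measures of a stochastic matrix vanish on
non-recurrent states: if `i` can reach `j` but `j` cannot reach `i`, then any
invariant probability measure `v` satisfies `v i = 0`. -/
theorem invariant_measure_vanishes_on_transient (N : ℕ) (hN : 1 ≤ N)
    (M : Matrix (Fin N) (Fin N) ℝ)
    (hM : ∀ i j, 0 ≤ M i j) (hrow : ∀ i, ∑ j, M i j = 1)
    (v : Fin N → ℝ) (hv0 : ∀ i, 0 ≤ v i) (hv1 : ∑ i, v i = 1)
    (hinv : ∀ k, ∑ i, v i * M i k = v k)
    (i j : Fin N)
    (hij : Relation.ReflTransGen (fun a b => 0 < M a b) i j)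
    (hji : ¬ Relation.ReflTransGen (fun a b => 0 < M a b) j i) :
    v i = 0 := by
  classical
  by_contra hvi
  have hvi' : 0 < v i := lt_of_le_of_ne (hv0 i) (Ne.symm hvi)
  set r : Fin N → Fin N → Prop := fun a b => 0 < M a b with hr
  set S : Finset (Fin N) := Finset.univ.filter (fun a => Relation.ReflTransGen r a i)
    with hS
  have memS : ∀ a, a ∈ S ↔ Relation.ReflTransGen r a i := by
    intro a; simp [hS]
  -- if a ∉ S, then M a k = 0 for all k ∈ S
  have hleak : ∀ a, a ∉ S → ∀ k ∈ S, M a k = 0 := by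
    intro a ha k hk
    by_contra h
    have hpos : 0 < M a k := lt_of_le_of_ne (hM a k) (Ne.symm h)
    exact ha ((memS a).2 (Relation.ReflTransGen.head hpos ((memS k).1 hk)))
  have hsle : ∀ a, ∑ k ∈ S, M a k ≤ 1 := by
    intro a
    rw [← hrow a]
    exact Finset.sum_le_sum_of_subset_of_nonneg (Finset.subset_univ S)
      (fun k _ _ => hM a k)
  have hsum1 : ∑ k ∈ S, v k = ∑ a ∈ S, v a * ∑ k ∈ S, M a k := by
    calc ∑ k ∈ S, v k = ∑ k ∈ S, ∑ a, v a * M a k := by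
          refine Finset.sum_congr rfl fun k _ => (hinv k).symm
      _ = ∑ a, ∑ k ∈ S, v a * M a k := Finset.sum_comm
      _ = ∑ a, v a * ∑ k ∈ S, M a k := by
          refine Finset.sum_congr rfl fun a _ => (Finset.mul_sum _ _ _).symm
      _ = ∑ a ∈ S, v a * ∑ k ∈ S, M a k := by
          refine (Finset.sum_subset (Finset.subset_univ S) ?_).symm
          intro a _ ha
          have : ∑ k ∈ S, M a k = 0 :=
            Finset.sum_eq_zero fun k hk => hleak a ha k hk
          rw [this, mul_zero]
  have hzero : ∀ a ∈ S, v a * (1 - ∑ k ∈ S, M a k) = 0 := by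
    have hsum0 : ∑ a ∈ S, v a * (1 - ∑ k ∈ S, M a k) = 0 := by
      have : ∑ a ∈ S, v a * (1 - ∑ k ∈ S, M a k)
          = ∑ a ∈ S, v a - ∑ a ∈ S, v a * ∑ k ∈ S, M a k := by
        rw [← Finset.sum_sub_distrib]
        refine Finset.sum_congr rfl fun a _ => by ring
      rw [this, ← hsum1, sub_self]
    intro a ha
    refine (Finset.sum_eq_zero_iff_of_nonneg ?_).1 hsum0 a ha
    intro b _
    exact mul_nonneg (hv0 b) (sub_nonneg.2 (hsle b))
  -- key: from a state in S with positive mass, all transitions stay in S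
  have hkey : ∀ a ∈ S, 0 < v a → ∀ b, 0 < M a b → b ∈ S := by
    intro a ha hva b hab
    have h1 : (1 : ℝ) - ∑ k ∈ S, M a k = 0 := by
      rcases mul_eq_zero.1 (hzero a ha) with h | h
      · exact absurd h (ne_of_gt hva)
      · exact h
    have h2 : ∑ k ∈ Finset.univ \ S, M a k = 0 := by
      have := Finset.sum_sdiff_eq_sub (Finset.subset_univ S) (f := M a)
      rw [hrow a] at this
      rw [this, sub_eq_zero]
      linarith [h1]
    by_contra hb
    have hbmem : b ∈ Finset.univ \ S := Finset.mem_sdiff.2 ⟨Finset.mem_univ b, hb⟩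
    have : M a b = 0 :=
      (Finset.sum_eq_zero_iff_of_nonneg (fun k _ => hM a k)).1 h2 b hbmem
    linarith
  -- induction along the path from i to j
  have hpath : ∀ c, Relation.ReflTransGen r i c → 0 < v c ∧ c ∈ S := by
    intro c hc
    induction hc with
    | refl => exact ⟨hvi', (memS i).2 Relation.ReflTransGen.refl⟩
    | tail hbc hstep ih =>
      rename_i b c
      obtain ⟨hvb, hbS⟩ := ih
      have hcS : c ∈ S := hkey b hbS hvb c hstep
      have hvc : 0 < v c := by
        have hle : v b * M b c ≤ ∑ a, v a * M a c := by
          refine Finset.single_le_sum (fun a _ => mul_nonneg (hv0 a) (hM a c))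
            (Finset.mem_univ b)
        have : 0 < v b * M b c := mul_pos hvb hstep
        rw [hinv c] at hle
        linarith
      exact ⟨hvc, hcS⟩
  exact hji ((memS j).1 (hpath j hij).2)
end

section
/- Cardinality of partially marked acyclic functional graphs: let n, k : ℕ with 1 ≤ k ≤ n, and let S ⊆ Fin n be a subset of cardinality k. Then the number of functions f : Fin n → Fin n satisfying (i) f i = i for every i ∉ S, (ii) f i ≠ i for every i ∈ S, and (iii) for every i ∈ S there exists t : ℕ with f^[t] i ∉ S, equals (n - k) * n^(k-1). -/
open scoped Classical

open Finset
open scoped Nat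

namespace CMA

variable {n : ℕ}

noncomputable def allF (T : Finset (Fin n)) : Finset (Fin n → Fin n) :=
  univ.filter (fun f => ∀ i ∉ T, f i = i)

noncomputable def acy (T : Finset (Fin n)) : Finset (Fin n → Fin n) :=
  univ.filter (fun f => (∀ i ∉ T, f i = i) ∧ ∀ i ∈ T, ∃ t, f^[t] i ∉ T)

noncomputable def permOn (C : Finset (Fin n)) : Finset (Fin n → Fin n) :=
  univ.filter (fun g => (∀ i ∉ C, g i = i) ∧ Set.MapsTo g ↑C ↑C ∧ Set.InjOn g ↑C)

noncomputable def cyc (f : Fin n → Fin n) (T : Finset (Fin n)) : Finset (Fin n) :=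
  T.filter (fun i => ∃ t, f^[t+1] i = i)

lemma cyc_subset (f : Fin n → Fin n) (T : Finset (Fin n)) : cyc f T ⊆ T :=
  filter_subset _ _

/-- iterates agree as long as the orbit stays where the functions agree -/
lemma iterate_agree {f g : Fin n → Fin n} {U : Set (Fin n)}
    (hfg : ∀ x ∈ U, g x = f x) (i : Fin n) :
    ∀ t, (∀ s < t, f^[s] i ∈ U) → g^[t] i = f^[t] i := by
  intro t
  induction t with
  | zero => intro; rfl
  | succ t ih =>
    intro h
    rw [Function.iterate_succ_apply', Function.iterate_succ_apply',
      ih (fun s hs => h s (hs.trans (Nat.lt_succ_self t))),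
      hfg _ (h t (Nat.lt_succ_self t))]

/-- a fixed set orbit pigeonhole: orbit staying in T \ cyc is impossible -/
lemma exists_exit {f : Fin n → Fin n} {T : Finset (Fin n)} {i : Fin n}
    (hi : i ∈ T) (hic : i ∉ cyc f T) : ∃ t, f^[t] i ∉ T \ (cyc f T) := by
  by_contra hcon
  push_neg at hcon
  obtain ⟨a, b, hab, he⟩ := Finite.exists_ne_map_eq_of_infinite (fun t : ℕ => f^[t] i)
  wlog h : a < b generalizing a b
  · exact this b a hab.symm he.symm (by omega)
  have hx : f^[a] i ∈ T \ cyc f T := hcon a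
  have hper : f^[(b - a - 1) + 1] (f^[a] i) = f^[a] i := by
    rw [← Function.iterate_add_apply]
    have : b - a - 1 + 1 + a = b := by omega
    rw [this, ← he]
  have : f^[a] i ∈ cyc f T := by
    rw [cyc, mem_filter]
    exact ⟨(mem_sdiff.mp hx).1, ⟨b - a - 1, hper⟩⟩
  exact (mem_sdiff.mp hx).2 this

lemma mem_cyc_imp_apply_mem {f : Fin n → Fin n} {T : Finset (Fin n)} {i : Fin n}
    (hf : ∀ x ∉ T, f x = x) (hi : i ∈ cyc f T) : f i ∈ cyc f T := by
  rw [cyc, mem_filter] at hi ⊢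
  obtain ⟨hiT, t, ht⟩ := hi
  have hfiT : f i ∈ T := by
    by_contra hfi
    have h1 : f^[t] (f i) = f i := Function.iterate_fixed (hf _ hfi) t
    have h2 : i = f i := by
      conv_lhs => rw [← ht, Function.iterate_succ_apply, h1]
    exact hfi (h2 ▸ hiT)

  refine ⟨hfiT, t, ?_⟩
  rw [← Function.iterate_succ_apply, Function.iterate_succ_apply', ht]

lemma inj_on_cyc {f : Fin n → Fin n} {T : Finset (Fin n)} :
    Set.InjOn f ↑(cyc f T) := by
  intro i hi j hj hij
  simp only [Finset.mem_coe, cyc, mem_filter] at hi hj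
  obtain ⟨-, a, ha⟩ := hi
  obtain ⟨-, b, hb⟩ := hj
  have hNi : f^[(a+1)*(b+1)] i = i := (Function.IsPeriodicPt.mul_const ha (b+1))
  have hNj : f^[(a+1)*(b+1)] j = j := by
    rw [mul_comm]
    exact Function.IsPeriodicPt.mul_const hb (a+1)
  have hN : (a+1)*(b+1) = ((a+1)*(b+1) - 1) + 1 := by
    have h1 : 0 < (a+1)*(b+1) := Nat.mul_pos (Nat.succ_pos a) (Nat.succ_pos b)
    omega
  rw [hN, Function.iterate_succ_apply] at hNi hNj
  rw [← hNi, ← hNj, hij]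


lemma iterate_injOn {f : Fin n → Fin n} {C : Finset (Fin n)}
    (hm : Set.MapsTo f ↑C ↑C) (hinj : Set.InjOn f ↑C) :
    ∀ (a : ℕ) (x y : Fin n), x ∈ ↑C → y ∈ ↑C → f^[a] x = f^[a] y → x = y := by
  intro a
  induction a with
  | zero => intro x y _ _ h; exact h
  | succ a ih =>
    intro x y hx hy h
    rw [Function.iterate_succ_apply', Function.iterate_succ_apply'] at h
    exact ih x y hx hy (hinj (hm.iterate a hx) (hm.iterate a hy) h)

lemma card_fiber (T C : Finset (Fin n)) (hCT : C ⊆ T) :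
    ((allF T).filter (fun f => cyc f T = C)).card
      = ((permOn C) ×ˢ (acy (T \ C))).card := by
  refine Finset.card_bij'
    (i := fun f _ => (fun x => if x ∈ C then f x else x,
                      fun x => if x ∈ C then x else f x))
    (j := fun p _ => fun x => if x ∈ C then p.1 x else p.2 x)
    ?_ ?_ ?_ ?_
  · -- forward membership
    intro f hf
    rw [mem_filter, allF, mem_filter] at hf
    obtain ⟨⟨-, hfT⟩, hcyc⟩ := hf
    rw [Finset.mem_product]
    dsimp only
    constructor
    · rw [permOn, mem_filter]
      refine ⟨mem_univ _, fun i hi => if_neg hi, ?_, ?_⟩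
      · intro x hx
        simp only [Finset.mem_coe] at hx ⊢
        rw [if_pos hx, ← hcyc] at *
        exact mem_cyc_imp_apply_mem hfT hx
      · intro x hx y hy hxy
        simp only [Finset.mem_coe] at hx hy
        dsimp only at hxy
        rw [if_pos hx, if_pos hy] at hxy
        exact inj_on_cyc (by rw [hcyc]; exact hx) (by rw [hcyc]; exact hy) hxy
    · rw [acy, mem_filter]
      refine ⟨mem_univ _, ?_, ?_⟩
      · intro i hi
        by_cases h : i ∈ C
        · simp only [if_pos h]
        · simp only [if_neg h]
          exact hfT i (fun hiT => hi (mem_sdiff.mpr ⟨hiT, h⟩))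
      · intro i hi
        rw [mem_sdiff] at hi
        have hex : ∃ t, f^[t] i ∉ T \ C := by
          have := exists_exit (f := f) (T := T) hi.1 (by rw [hcyc]; exact hi.2)
          rwa [hcyc] at this
        set t₀ := Nat.find hex with ht₀
        refine ⟨t₀, ?_⟩
        have hagree : (fun x => if x ∈ C then x else f x)^[t₀] i = f^[t₀] i := by
          refine iterate_agree (U := ↑(T \ C)) ?_ i t₀ ?_
          · intro x hx
            simp only [Finset.mem_coe, mem_sdiff] at hx
            rw [if_neg hx.2]
          · intro s hs
            have := Nat.find_min hex hs
            simpa using not_not.mp this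
        rw [hagree]
        exact Nat.find_spec hex
  · -- backward membership
    intro p hp
    rw [Finset.mem_product, permOn, mem_filter, acy, mem_filter] at hp
    obtain ⟨⟨-, hg1, hg2, hg3⟩, -, hh1, hh2⟩ := hp
    set f : Fin n → Fin n := fun x => if x ∈ C then p.1 x else p.2 x with hfdef
    have hfT : ∀ i ∉ T, f i = i := by
      intro i hi
      have hiC : i ∉ C := fun h => hi (hCT h)
      simp only [hfdef, if_neg hiC]
      exact hh1 i (fun h => hi (mem_sdiff.mp h).1)
    have hmapsC : Set.MapsTo f ↑C ↑C := by
      intro x hx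
      simp only [Finset.mem_coe] at hx ⊢
      simp only [hfdef, if_pos hx]
      exact hg2 hx
    have hinjC : Set.InjOn f ↑C := by
      intro x hx y hy hxy
      simp only [Finset.mem_coe] at hx hy
      simp only [hfdef, if_pos hx, if_pos hy] at hxy
      exact hg3 hx hy hxy
    rw [mem_filter, allF, mem_filter]
    refine ⟨⟨mem_univ _, hfT⟩, ?_⟩
    ext i
    constructor
    · -- cyc ⊆ C
      intro hi
      rw [cyc, mem_filter] at hi
      obtain ⟨hiT, q, hq⟩ := hi
      by_contra hiC
      have claim : ∀ m, f^[m] i ∈ T \ C := by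
        intro m
        by_contra hm
        have hper : ∀ r : ℕ, f^[(q+1)*r] i = i := fun r => Function.IsPeriodicPt.mul_const hq r
        set Q := (q+1)*(m+1) with hQ
        have hQm : Q = (Q - m) + m := by
          have : m ≤ Q := by calc m ≤ m+1 := Nat.le_succ m
                                 _ ≤ (q+1)*(m+1) := Nat.le_mul_of_pos_left _ (Nat.succ_pos q)
          omega
        have hQi : f^[Q - m] (f^[m] i) = i := by
          rw [← Function.iterate_add_apply, ← hQm]
          exact hper (m+1)
        rcases (by
          rw [mem_sdiff] at hm
          push_neg at hm
          by_cases hmT : f^[m] i ∈ T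
          · exact Or.inr (hm hmT)
          · exact Or.inl hmT : (f^[m] i ∉ T) ∨ (f^[m] i ∈ C)) with hout | hin
        · have hfix : ∀ r, f^[r] (f^[m] i) = f^[m] i :=
            fun r => Function.iterate_fixed (hfT _ hout) r
          rw [hfix] at hQi
          exact hout (by rw [hQi]; exact hiT)
        · have : f^[Q - m] (f^[m] i) ∈ ↑C := hmapsC.iterate (Q - m) hin
          rw [hQi] at this
          exact hiC this
      have hagree : ∀ t, p.2^[t] i = f^[t] i := by
        intro t
        refine iterate_agree (U := ↑(T \ C)) ?_ i t (fun s _ => claim s)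
        intro x hx
        simp only [Finset.mem_coe, mem_sdiff] at hx
        simp only [hfdef, if_neg hx.2]
      obtain ⟨t, ht⟩ := hh2 i (mem_sdiff.mpr ⟨hiT, hiC⟩)
      rw [hagree t] at ht
      exact ht (claim t)
    · -- C ⊆ cyc
      intro hi
      rw [cyc, mem_filter]
      refine ⟨hCT hi, ?_⟩
      obtain ⟨a, b, hab, he⟩ := Finite.exists_ne_map_eq_of_infinite (fun t : ℕ => f^[t] i)
      wlog h : a < b generalizing a b
      · exact this b a hab.symm he.symm (by omega)
      have hbi : f^[a] (f^[b-a] i) = f^[a] i := by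
        rw [← Function.iterate_add_apply]
        have : a + (b - a) = b := by omega
        rw [this, ← he]
      have hieq : f^[b-a] i = i :=
        iterate_injOn hmapsC hinjC a _ i (hmapsC.iterate (b-a) hi) hi hbi
      refine ⟨b - a - 1, ?_⟩
      rwa [show b - a - 1 + 1 = b - a by omega]
  · -- left inverse
    intro f hf
    funext x
    dsimp only
    by_cases h : x ∈ C
    · rw [if_pos h, if_pos h]
    · rw [if_neg h, if_neg h]
  · -- right inverse
    intro p hp
    rw [Finset.mem_product, permOn, mem_filter, acy, mem_filter] at hp
    obtain ⟨⟨-, hg1, -, -⟩, -, hh1, -⟩ := hp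
    refine Prod.ext ?_ ?_ <;> funext x <;> dsimp only <;> by_cases h : x ∈ C
    · simp only [if_pos h]
    · rw [if_neg h]
      exact (hg1 x h).symm
    · rw [if_pos h]
      exact (hh1 x (fun hx => (mem_sdiff.mp hx).2 h)).symm
    · simp only [if_neg h]


lemma card_allF (T : Finset (Fin n)) : (allF T).card = n ^ T.card := by
  have hc : Fintype.card (T → Fin n) = n ^ T.card := by
    simp [Fintype.card_fun]
  rw [allF, ← hc, ← Finset.card_univ]
  refine Finset.card_bij' (i := fun f _ => fun x : T => f x)
    (j := fun u _ => fun x => if h : x ∈ T then u ⟨x, h⟩ else x) ?_ ?_ ?_ ?_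
  · intros; exact mem_univ _
  · intro u _
    simp only [mem_filter, mem_univ, true_and]
    intro i hi
    rw [dif_neg hi]
  · intro f hf
    simp only [mem_filter, mem_univ, true_and] at hf
    funext x
    by_cases h : x ∈ T
    · simp only [dif_pos h]
    · simp only [dif_neg h]
      exact (hf x h).symm
  · intro u _
    funext x
    simp [x.2]

lemma card_permOn (C : Finset (Fin n)) : (permOn C).card = C.card ! := by
  rw [permOn, ← Fintype.card_coe C, ← Fintype.card_perm, ← Finset.card_univ]
  refine Finset.card_bij'
    (i := fun (g : Fin n → Fin n) (hg : g ∈ Finset.univ.filter (fun g : Fin n → Fin n =>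
      (∀ i ∉ C, g i = i) ∧ Set.MapsTo g ↑C ↑C ∧ Set.InjOn g ↑C)) =>
      Equiv.ofBijective (fun x : C => (⟨g x, by
        have hg' := (Finset.mem_filter.mp hg).2
        exact hg'.2.1 x.2⟩ : C))
        (by
          have hg' := (Finset.mem_filter.mp hg).2
          refine Finite.injective_iff_bijective.mp ?_
          intro x y hxy
          exact Subtype.ext (hg'.2.2 x.2 y.2 (congrArg Subtype.val hxy))))
    (j := fun σ _ => fun x => if h : x ∈ C then (σ ⟨x, h⟩ : Fin n) else x)
    ?_ ?_ ?_ ?_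
  · intros; exact mem_univ _
  · intro σ _
    simp only [mem_filter, mem_univ, true_and]
    refine ⟨fun i hi => dif_neg hi, ?_, ?_⟩
    · intro x hx
      simp only [Finset.mem_coe] at hx ⊢
      simp only [dif_pos hx]
      exact (σ ⟨x, hx⟩).2
    · intro x hx y hy hxy
      simp only [Finset.mem_coe] at hx hy
      simp only [dif_pos hx, dif_pos hy] at hxy
      have := σ.injective (Subtype.ext hxy)
      exact congrArg Subtype.val this
  · intro g hg
    have hg' := (Finset.mem_filter.mp hg).2
    funext x
    by_cases h : x ∈ C
    · simp [h]
    · simp [h, hg'.1 x h]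
  · intro σ _
    ext x
    simp only [Equiv.ofBijective_apply, dif_pos x.2]

lemma numeric_id (n K : ℕ) (hK : K ≤ n) :
    ∑ j ∈ range (K+1), K.choose j * (j ! *
      (if K - j = 0 then 1 else (n - (K-j)) * n ^ (K-j-1))) = n ^ K := by
  set G : ℕ → ℤ := fun m => (K.descFactorial (K - m) : ℤ) *
      (if m = 0 then 1 else ((n:ℤ) - (m:ℤ)) * (n:ℤ) ^ (m-1)) with hG
  have hZ : ∑ j ∈ range (K+1), ((K.choose j * (j ! *
      (if K - j = 0 then 1 else (n - (K-j)) * n ^ (K-j-1))) : ℕ) : ℤ) = (n:ℤ) ^ K := by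
    have step1 : ∀ j ∈ range (K+1), ((K.choose j * (j ! *
        (if K - j = 0 then 1 else (n - (K-j)) * n ^ (K-j-1))) : ℕ) : ℤ)
        = (fun j => G (K - j)) j := by
      intro j hj
      rw [mem_range, Nat.lt_succ_iff] at hj
      have hjj : K - (K - j) = j := by omega
      simp only [hG, hjj, Nat.descFactorial_eq_factorial_mul_choose]
      by_cases h : K - j = 0
      · simp only [h, if_pos rfl]
        push_cast; ring
      · rw [if_neg h, if_neg h]
        push_cast [Nat.cast_sub (show K - j ≤ n by omega)]
        ring
    rw [Finset.sum_congr rfl step1, ← Finset.sum_range_reflect]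
    have step2 : ∀ m ∈ range (K+1),
        (fun j => G (K - j)) (K + 1 - 1 - m) = G m := by
      intro m hm
      rw [mem_range, Nat.lt_succ_iff] at hm
      simp only [Nat.add_sub_cancel, Nat.sub_sub_self hm]
    rw [Finset.sum_congr rfl step2, Finset.sum_range_succ']
    set e : ℕ → ℤ := fun m => (K.descFactorial (K - m) : ℤ) * (n:ℤ) ^ m with he
    have step3 : ∀ m ∈ range K, G (m+1) = e (m+1) - e m := by
      intro m hm
      rw [mem_range] at hm
      have h2 : K - (K - (m+1)) = m + 1 := by omega
      have h1 : K.descFactorial (K - m) = (m+1) * K.descFactorial (K - (m+1)) := by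
        rw [show K - m = (K-(m+1))+1 by omega, Nat.descFactorial_succ, h2]
      simp only [hG, he, if_neg (Nat.succ_ne_zero m), Nat.add_sub_cancel, h1]
      push_cast; ring
    rw [Finset.sum_congr rfl step3, Finset.sum_range_sub]
    simp [hG, he, Nat.descFactorial_self]
  rw [← Nat.cast_sum] at hZ
  exact_mod_cast hZ

lemma partition (T : Finset (Fin n)) :
    n ^ T.card = ∑ C ∈ T.powerset, C.card ! * (acy (T \ C)).card := by
  rw [← card_allF T,
    Finset.card_eq_sum_card_fiberwise (f := fun f => cyc f T) (t := T.powerset)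
      (fun f _ => mem_powerset.mpr (cyc_subset f T))]
  refine Finset.sum_congr rfl ?_
  intro C hC
  rw [card_fiber T C (mem_powerset.mp hC), Finset.card_product, card_permOn C]

lemma acy_card (T : Finset (Fin n)) :
    (acy T).card = if T.card = 0 then 1 else (n - T.card) * n ^ (T.card - 1) := by
  induction T using Finset.strongInduction with
  | _ T ih =>
    have hTn : T.card ≤ n := by
      have := Finset.card_le_univ T
      simpa using this
    have hpart := partition T
    have hnum : ∑ C ∈ T.powerset, C.card ! *
        (if (T \ C).card = 0 then 1 else (n - (T \ C).card) * n ^ ((T \ C).card - 1))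
        = n ^ T.card := by
      have h1 : ∀ C ∈ T.powerset, C.card ! *
          (if (T \ C).card = 0 then 1 else (n - (T \ C).card) * n ^ ((T \ C).card - 1))
          = (fun m => m ! * (if T.card - m = 0 then 1
              else (n - (T.card - m)) * n ^ (T.card - m - 1))) C.card := by
        intro C hC
        rw [Finset.card_sdiff_of_subset (mem_powerset.mp hC)]
      have h2 := Finset.sum_powerset_apply_card
        (f := fun m => m ! * (if T.card - m = 0 then 1
          else (n - (T.card - m)) * n ^ (T.card - m - 1))) (x := T)
      rw [Finset.sum_congr rfl h1, h2]
      simp only [smul_eq_mul]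
      exact numeric_id n T.card hTn
    have hEmp : (∅ : Finset (Fin n)) ∈ T.powerset := Finset.empty_mem_powerset T
    rw [← Finset.add_sum_erase _ _ hEmp] at hpart hnum
    have hsame : ∑ C ∈ T.powerset.erase ∅, C.card ! * (acy (T \ C)).card
        = ∑ C ∈ T.powerset.erase ∅, C.card ! *
            (if (T \ C).card = 0 then 1 else (n - (T \ C).card) * n ^ ((T \ C).card - 1)) := by
      refine Finset.sum_congr rfl ?_
      intro C hC
      have hCT : C ⊆ T := mem_powerset.mp (Finset.mem_of_mem_erase hC)
      have hne : C.Nonempty := Finset.nonempty_of_ne_empty (Finset.ne_of_mem_erase hC)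
      rw [ih (T \ C) (Finset.sdiff_ssubset hCT hne)]
    simp only [Finset.sdiff_empty, Finset.card_empty, Nat.factorial_zero, one_mul] at hpart hnum
    rw [hsame] at hpart
    rw [← hnum] at hpart
    exact Nat.add_right_cancel hpart.symm

end CMA

/-- Cardinality of partially marked acyclic functional graphs: the number of
functions `f : Fin n → Fin n` fixing every unmarked vertex, moving every marked
vertex, and such that every directed path starting in the marked set `S`
eventually leaves `S`, equals `(n - k) * n ^ (k - 1)` where `k = #S`. -/
theorem card_marked_acyclic (n k : ℕ) (hk1 : 1 ≤ k) (hkn : k ≤ n)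
    (S : Finset (Fin n)) (hS : S.card = k) :
    (Finset.univ.filter (fun f : Fin n → Fin n =>
        (∀ i : Fin n, i ∉ S → f i = i) ∧
        (∀ i ∈ S, f i ≠ i) ∧
        (∀ i ∈ S, ∃ t : ℕ, f^[t] i ∉ S))).card = (n - k) * n ^ (k - 1) := by
  have hset : (Finset.univ.filter (fun f : Fin n → Fin n =>
        (∀ i : Fin n, i ∉ S → f i = i) ∧
        (∀ i ∈ S, f i ≠ i) ∧
        (∀ i ∈ S, ∃ t : ℕ, f^[t] i ∉ S))) = CMA.acy S := by
    simp only [CMA.acy]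
    apply Finset.filter_congr
    intro f _
    constructor
    · rintro ⟨h1, -, h3⟩; exact ⟨h1, h3⟩
    · rintro ⟨h1, h3⟩
      refine ⟨h1, ?_, h3⟩
      intro i hi hfi
      obtain ⟨t, ht⟩ := h3 i hi
      rw [Function.iterate_fixed hfi] at ht
      exact ht hi
  rw [hset, CMA.acy_card S, hS, if_neg (by omega)]
end

section
/- Cardinality of the set of rooted spanning trees: let n ≥ 2 and j : Fin n. Then the number of spanning trees rooted at j, i.e. the number of functions f : Fin n → Fin n with f j = j and such that for every i : Fin n there exists t : ℕ with f^[t] i = j, equals n^(n-2). -/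
/-!
Joyal's bijective proof. Call a triple `(b, f, a)` with `f` a spanning tree rooted at `b` and
`a` a vertex a vertebrate. Endofunctions of an `n`-element set and vertebrates both decompose
along a finite set `P` of vertices into some structure on `P` and a forest rooted in `P`: an
endofunction `g` is a permutation of its periodic points `P` together with the forest formed by
`g` outside `P`, while a vertebrate is the path `a → ⋯ → b`, i.e. a linear ordering of the set
`P` of its vertices, together with the forest formed by `f` outside `P`. A permutation and a linear
ordering of `P` can each be chosen in `|P|!` ways, so there are as many vertebrates as
endofunctions, `n ^ n`. Relabelling vertices shows that every vertex is the root of equally many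
trees, so there are `n ^ 2` times as many vertebrates as trees rooted at `j`.
-/

open scoped Classical Nat

open Function Finset Equiv

namespace Cayley

variable {α : Type*}

theorem exists_iterate_mem_of_eqOn_compl {P : Set α} {g h : α → α} (hgh : Set.EqOn h g Pᶜ)
    {x : α} {t : ℕ} (ht : g^[t] x ∈ P) : ∃ s, h^[s] x ∈ P := by
  induction t generalizing x with
  | zero => exact ⟨0, ht⟩
  | succ t ih =>
    by_cases hx : x ∈ P
    · exact ⟨0, hx⟩
    · obtain ⟨s, hs⟩ := ih (x := g x) ht
      exact ⟨s + 1, by rwa [iterate_succ_apply, hgh hx]⟩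

theorem exists_iterate_mem_periodicPts [Finite α] (g : α → α) (x : α) :
    ∃ t, g^[t] x ∈ periodicPts g := by
  obtain ⟨s, t, hst, he⟩ : ∃ s t, s < t ∧ g^[s] x = g^[t] x := by
    obtain ⟨s, t, hne, he⟩ := Finite.exists_ne_map_eq_of_infinite (g^[·] x)
    rcases hne.lt_or_gt with h | h
    exacts [⟨s, t, h, he⟩, ⟨t, s, h, he.symm⟩]
  refine ⟨s, mk_mem_periodicPts (n := t - s) (by omega) ?_⟩
  change g^[t - s] (g^[s] x) = g^[s] x
  rw [← iterate_add_apply, Nat.sub_add_cancel hst.le, he]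

theorem injOn_iterate_Iic_of_first_hit {f : α → α} {a b : α} {d : ℕ} (hd : f^[d] a = b)
    (hmin : ∀ t < d, f^[t] a ≠ b) : Set.InjOn (f^[·] a) (Set.Iic d) := by
  intro i hi j hj hij
  by_contra hne
  wlog hlt : i < j generalizing i j
  · exact this hj hi hij.symm (Ne.symm hne) (by omega)
  refine hmin (d - j + i) (by simp only [Set.mem_Iic] at hj; omega) ?_
  simp only at hij
  rw [iterate_add_apply, hij, ← iterate_add_apply, Nat.sub_add_cancel hj, hd]

section Glue

variable {P : Finset α} {s : P → P} {h : α → α}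

noncomputable def glue (P : Finset α) (s : P → P) (h : α → α) (x : α) : α :=
  if hx : x ∈ P then s ⟨x, hx⟩ else h x

theorem glue_of_mem {x : α} (hx : x ∈ P) : glue P s h x = s ⟨x, hx⟩ := dif_pos hx

theorem glue_of_notMem {x : α} (hx : x ∉ P) : glue P s h x = h x := dif_neg hx

theorem semiconj_glue : Semiconj (↑) s (glue P s h) := fun x => (glue_of_mem x.2).symm

theorem iterate_glue (x : P) (t : ℕ) : (glue P s h)^[t] x = (s^[t] x : α) :=
  (semiconj_glue.iterate_right t x).symm

theorem exists_iterate_glue_mem (hh : ∀ x, ∃ t, h^[t] x ∈ P) (x : α) :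
    ∃ t, (glue P s h)^[t] x ∈ P :=
  have ⟨_, ht⟩ := hh x
  exists_iterate_mem_of_eqOn_compl (P := (P : Set α)) (fun _ hx => glue_of_notMem hx) ht

theorem piecewise_id_glue (hh : ∀ x ∈ P, h x = x) : P.piecewise id (glue P s h) = h := by
  ext x
  by_cases hx : x ∈ P
  · simp [hx, hh]
  · simp [hx, glue_of_notMem]

theorem periodicPts_glue_perm (σ : Perm P) (hh : ∀ x, ∃ t, h^[t] x ∈ P) :
    periodicPts (glue P σ h) = P := by
  apply Set.Subset.antisymm
  · rintro x ⟨m, hm, hx⟩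
    obtain ⟨t, ht⟩ := exists_iterate_glue_mem (s := σ) hh x
    rw [← (hx.mul_const t).eq, ← Nat.sub_add_cancel (Nat.le_mul_of_pos_left t hm),
      iterate_add_apply, show (glue P σ h)^[t] x = ((⟨_, ht⟩ : P) : α) from rfl, iterate_glue]
    exact Subtype.property _
  · intro x hx
    exact semiconj_glue.mapsTo_periodicPts (σ.injective.mem_periodicPts ⟨x, hx⟩)

end Glue

section Path

variable {P : Finset α} {m : ℕ}

/-- Moves one step along the path `e 0 → e 1 → ⋯ → e m`, stopping at `e m`. -/
def pathSucc (e : Fin (m + 1) ≃ P) (x : P) : P :=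
  e ⟨min (e.symm x + 1) m, Nat.lt_succ_of_le (min_le_right _ _)⟩

theorem pathSucc_apply (e : Fin (m + 1) ≃ P) (i : Fin (m + 1)) :
    pathSucc e (e i) = e ⟨min (i + 1) m, Nat.lt_succ_of_le (min_le_right _ _)⟩ := by
  simp [pathSucc]

theorem iterate_glue_pathSucc (e : Fin (m + 1) ≃ P) (h : α → α) (i : Fin (m + 1)) (t : ℕ) :
    (glue P (pathSucc e) h)^[t] (e i) =
      e ⟨min (i + t) m, Nat.lt_succ_of_le (min_le_right _ _)⟩ := by
  rw [iterate_glue]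
  congr 1
  induction t with
  | zero => simp [Nat.min_eq_left (Nat.le_of_lt_succ i.2)]
  | succ t ih =>
    rw [iterate_succ_apply', ih, pathSucc_apply]
    congr 2
    dsimp only
    omega

theorem iterate_glue_pathSucc_zero (e : Fin (m + 1) ≃ P) (h : α → α) (i : Fin (m + 1)) :
    (glue P (pathSucc e) h)^[i] (e 0) = e i := by
  rw [iterate_glue_pathSucc]
  congr 3
  simp [Nat.min_eq_left (Nat.le_of_lt_succ i.2)]

end Path

variable [Fintype α]

/-- `rootedForests {r}` is the set of spanning trees rooted at `r`. -/
noncomputable def rootedForests (P : Finset α) : Finset (α → α) :=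
  univ.filter fun h => (∀ x ∈ P, h x = x) ∧ ∀ x, ∃ t, h^[t] x ∈ P

theorem mem_rootedForests {P : Finset α} {h : α → α} :
    h ∈ rootedForests P ↔ (∀ x ∈ P, h x = x) ∧ ∀ x, ∃ t, h^[t] x ∈ P := by
  simp [rootedForests]

theorem rootedForests_empty [Nonempty α] : rootedForests (∅ : Finset α) = ∅ :=
  eq_empty_of_forall_notMem fun h hh => by
    obtain ⟨t, ht⟩ := (mem_rootedForests.1 hh).2 (Classical.arbitrary α)
    exact notMem_empty _ ht

theorem piecewise_id_mem_rootedForests {P : Finset α} {g : α → α}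
    (hg : ∀ x, ∃ t, g^[t] x ∈ P) : P.piecewise id g ∈ rootedForests P := by
  refine mem_rootedForests.2 ⟨fun x hx => piecewise_eq_of_mem _ _ _ hx, fun x => ?_⟩
  have ⟨_, ht⟩ := hg x
  exact exists_iterate_mem_of_eqOn_compl (P := (P : Set α))
    (fun _ hy => piecewise_eq_of_notMem _ _ _ hy) ht

theorem card_filter_periodicPts_eq (P : Finset α) :
    #(univ.filter fun g : α → α => periodicPts g = P) = (#P)! * #(rootedForests P) := by
  rw [← Fintype.card_coe P, ← Fintype.card_perm, ← card_univ, ← card_product]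
  symm
  refine card_bij (fun p _ => glue P p.1 p.2) ?_ ?_ ?_
  · rintro ⟨σ, h⟩ hp
    simp only [mem_product, mem_rootedForests] at hp
    simp [periodicPts_glue_perm σ hp.2.2]
  · rintro ⟨σ, h⟩ hp ⟨σ', h'⟩ hp' he
    simp only [mem_product, mem_rootedForests] at hp hp'
    simp only at he
    refine Prod.ext (Equiv.ext fun x => Subtype.ext ?_) ?_
    · simpa [glue_of_mem x.2] using congrFun he x
    · rw [← piecewise_id_glue (s := σ) hp.2.1, ← piecewise_id_glue (s := σ') hp'.2.1, he]
  · intro g hg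
    have hgP : periodicPts g = P := by simpa using hg
    have hbij : Set.BijOn g P P := hgP ▸ bijOn_periodicPts g
    refine ⟨(hbij.equiv g, P.piecewise id g), ?_, ?_⟩
    · refine mem_product.2 ⟨mem_univ _, piecewise_id_mem_rootedForests fun x => ?_⟩
      obtain ⟨t, ht⟩ := exists_iterate_mem_periodicPts g x
      exact ⟨t, by rwa [hgP] at ht⟩
    · ext x
      by_cases hx : x ∈ P
      · simp [glue_of_mem hx, Set.BijOn.equiv]
      · simp [glue_of_notMem hx, hx]

theorem conj_mem_rootedForests {β : Type*} [Fintype β] (e : α ≃ β) {P : Finset α}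
    {f : α → α} (hf : f ∈ rootedForests P) : e.conj f ∈ rootedForests (P.map e.toEmbedding) := by
  have hsemi : Semiconj e f (e.conj f) := fun x => by simp
  obtain ⟨hfix, hreach⟩ := mem_rootedForests.1 hf
  refine mem_rootedForests.2 ⟨fun y hy => ?_, fun y => ?_⟩
  · rw [← e.apply_symm_apply y, ← hsemi, hfix _ (mem_map_equiv.1 hy)]
  · obtain ⟨t, ht⟩ := hreach (e.symm y)
    refine ⟨t, ?_⟩
    rw [← e.apply_symm_apply y, ← hsemi.iterate_right t]
    exact mem_map_of_mem _ ht

theorem card_rootedForests_singleton (r s : α) :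
    #(rootedForests {r}) = #(rootedForests {s}) := by
  have key : ∀ r s : α, #(rootedForests {r}) ≤ #(rootedForests {s}) := fun r s =>
    card_le_card_of_injOn (swap r s).conj
      (fun f hf => by simpa using conj_mem_rootedForests (swap r s) hf)
      (swap r s).conj.injective.injOn
  exact le_antisymm (key r s) (key s r)

noncomputable def forwardOrbit (f : α → α) (a : α) : Finset α :=
  univ.filter fun x => ∃ t, f^[t] a = x

theorem mem_forwardOrbit {f : α → α} {a x : α} : x ∈ forwardOrbit f a ↔ ∃ t, f^[t] a = x := by
  simp [forwardOrbit]

theorem forwardOrbit_eq_image_range {f : α → α} {a b : α} {d : ℕ} (hb : f b = b)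
    (hd : f^[d] a = b) : forwardOrbit f a = (range (d + 1)).image (f^[·] a) := by
  ext x
  simp only [mem_forwardOrbit, mem_image, mem_range]
  refine ⟨fun ⟨t, ht⟩ => ?_, fun ⟨t, _, ht⟩ => ⟨t, ht⟩⟩
  rcases Nat.lt_or_ge t (d + 1) with htd | htd
  · exact ⟨t, htd, ht⟩
  · refine ⟨d, d.lt_succ_self, ?_⟩
    rw [← ht, ← Nat.sub_add_cancel (Nat.le_of_succ_le htd), iterate_add_apply, hd,
      iterate_fixed hb]

theorem card_forwardOrbit {f : α → α} {a b : α} {d : ℕ} (hb : f b = b) (hd : f^[d] a = b)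
    (hmin : ∀ t < d, f^[t] a ≠ b) : #(forwardOrbit f a) = d + 1 := by
  rw [forwardOrbit_eq_image_range hb hd, card_image_of_injOn, card_range]
  refine (injOn_iterate_Iic_of_first_hit hd hmin).mono fun i hi => ?_
  simp only [coe_range, Set.mem_Iio] at hi
  exact Nat.le_of_lt_succ hi

section Path

variable {P : Finset α} {m : ℕ}

theorem glue_pathSucc_mem_rootedForests (e : Fin (m + 1) ≃ P) {h : α → α}
    (hh : h ∈ rootedForests P) :
    glue P (pathSucc e) h ∈ rootedForests {(e (Fin.last m) : α)} := by
  have hlast : ∀ i, (glue P (pathSucc e) h)^[m] (e i) = e (Fin.last m) := fun i => by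
    rw [iterate_glue_pathSucc]
    congr 3
    omega
  refine mem_rootedForests.2 ⟨fun x hx => ?_, fun x => ?_⟩
  · rw [mem_singleton.1 hx, ← iterate_one (glue P _ h), iterate_glue_pathSucc]
    congr 3
    simp
  · obtain ⟨t, ht⟩ := exists_iterate_glue_mem (s := pathSucc e) (mem_rootedForests.1 hh).2 x
    refine ⟨m + t, mem_singleton.2 ?_⟩
    rw [iterate_add_apply, show (glue P _ h)^[t] x = e (e.symm ⟨_, ht⟩) by simp, hlast]

theorem forwardOrbit_glue_pathSucc (e : Fin (m + 1) ≃ P) (h : α → α) :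
    forwardOrbit (glue P (pathSucc e) h) (e 0) = P := by
  ext x
  refine ⟨fun hx => ?_, fun hx => ?_⟩
  · obtain ⟨t, rfl⟩ := mem_forwardOrbit.1 hx
    rw [iterate_glue_pathSucc]
    exact Subtype.property _
  · refine mem_forwardOrbit.2 ⟨e.symm ⟨x, hx⟩, ?_⟩
    rw [iterate_glue_pathSucc_zero, apply_symm_apply]

theorem exists_glue_pathSucc_eq {f : α → α} {a b : α} (hf : f ∈ rootedForests {b})
    (hm : #(forwardOrbit f a) = m + 1) :
    ∃ e : Fin (m + 1) ≃ forwardOrbit f a,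
      glue _ (pathSucc e) ((forwardOrbit f a).piecewise id f) = f ∧
        (e 0 : α) = a ∧ (e (Fin.last m) : α) = b := by
  simp only [mem_rootedForests, mem_singleton, forall_eq] at hf
  obtain ⟨hb, hreach⟩ := hf
  obtain ⟨d, hd, hmin⟩ : ∃ d, f^[d] a = b ∧ ∀ t < d, f^[t] a ≠ b :=
    ⟨Nat.find (hreach a), Nat.find_spec (hreach a), fun _ => Nat.find_min (hreach a)⟩
  obtain rfl : d = m := by have := card_forwardOrbit hb hd hmin; omega
  let e := Equiv.ofBijective (fun i : Fin (d + 1) => (⟨f^[i] a, mem_forwardOrbit.2 ⟨i, rfl⟩⟩ :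
      forwardOrbit f a)) <| (Fintype.bijective_iff_injective_and_card _).2
    ⟨fun i j hij => Fin.ext <| injOn_iterate_Iic_of_first_hit hd hmin
      (Nat.le_of_lt_succ i.2) (Nat.le_of_lt_succ j.2) (congrArg Subtype.val hij), by simp [hm]⟩
  refine ⟨e, funext fun x => ?_, rfl, hd⟩
  by_cases hx : x ∈ forwardOrbit f a
  · obtain ⟨i, hi⟩ := e.surjective ⟨x, hx⟩
    obtain rfl : f^[i] a = x := congrArg Subtype.val hi
    rw [glue_of_mem hx, ← hi, pathSucc_apply]
    change f^[min (i + 1) d] a = f (f^[i] a)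
    rw [← iterate_succ_apply' f]
    rcases Nat.lt_or_ge (i : ℕ) d with hid | hid
    · rw [Nat.min_eq_left hid]
    · rw [Nat.min_eq_right (by omega), show (i : ℕ) = d by omega, iterate_succ_apply', hd, hb]
  · rw [glue_of_notMem hx, piecewise_eq_of_notMem _ _ _ hx]

end Path

noncomputable def vertebrates : Finset (Σ _ : α, (α → α) × α) :=
  univ.sigma fun b => rootedForests {b} ×ˢ univ

theorem card_filter_forwardOrbit_eq [Nonempty α] (P : Finset α) :
    #(vertebrates.filter fun v => forwardOrbit v.2.1 v.2.2 = P) =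
      (#P)! * #(rootedForests P) := by
  rcases P.eq_empty_or_nonempty with rfl | hP
  · simp only [rootedForests_empty, card_empty, mul_zero, card_eq_zero, filter_eq_empty_iff]
    exact fun v _ hv => notMem_empty v.2.2 (hv ▸ mem_forwardOrbit.2 ⟨0, rfl⟩)
  obtain ⟨m, hm⟩ : ∃ m, #P = m + 1 := Nat.exists_eq_succ_of_ne_zero hP.card_pos.ne'
  have e₀ : Fin (m + 1) ≃ P := (P.equivFinOfCardEq hm).symm
  rw [hm, ← Fintype.card_fin (m + 1), ← Fintype.card_equiv e₀, ← card_univ, ← card_product]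
  symm
  refine card_bij (fun p _ => ⟨p.1 (Fin.last m), glue P (pathSucc p.1) p.2, p.1 0⟩) ?_ ?_ ?_
  · rintro ⟨e, h⟩ hp
    simp only [mem_product] at hp
    simp [vertebrates, glue_pathSucc_mem_rootedForests e hp.2, forwardOrbit_glue_pathSucc]
  · rintro ⟨e, h⟩ hp ⟨e', h'⟩ hp' he
    simp only [mem_product, mem_rootedForests] at hp hp'
    simp only [Sigma.mk.injEq, heq_eq_eq, Prod.mk.injEq] at he
    obtain ⟨-, hglue, h0⟩ := he
    refine Prod.ext (Equiv.ext fun i => Subtype.ext ?_) ?_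
    · rw [← iterate_glue_pathSucc_zero e h, ← iterate_glue_pathSucc_zero e' h', hglue, h0]
    · rw [← piecewise_id_glue (s := pathSucc e) hp.2.1,
        ← piecewise_id_glue (s := pathSucc e') hp'.2.1, hglue]
  · rintro ⟨b, f, a⟩ hv
    simp only [vertebrates, mem_filter, mem_sigma, mem_product, mem_univ, and_true,
      true_and] at hv
    obtain ⟨hf, rfl⟩ := hv
    obtain ⟨e, hglue, h0, hlast⟩ := exists_glue_pathSucc_eq hf hm
    refine ⟨(e, (forwardOrbit f a).piecewise id f), mem_product.2 ⟨mem_univ _,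
      piecewise_id_mem_rootedForests fun x => ?_⟩, ?_⟩
    · obtain ⟨t, ht⟩ := (mem_rootedForests.1 hf).2 x
      refine ⟨t, ?_⟩
      rw [mem_singleton.1 ht, ← hlast]
      exact Subtype.property _
    · simp only [hglue, h0, hlast]

theorem card_sq_mul_card_rootedForests_singleton (r : α) :
    Fintype.card α ^ 2 * #(rootedForests {r}) = Fintype.card α ^ Fintype.card α := by
  have : Nonempty α := ⟨r⟩
  calc Fintype.card α ^ 2 * #(rootedForests {r})
      = #(vertebrates (α := α)) := by
        simp only [vertebrates, card_sigma, card_product, card_univ,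
          card_rootedForests_singleton _ r, sum_const, smul_eq_mul]
        ring
    _ = ∑ P, #(vertebrates.filter fun v => forwardOrbit v.2.1 v.2.2 = P) :=
        card_eq_sum_card_fiberwise fun _ _ => mem_univ _
    _ = ∑ P : Finset α, (#P)! * #(rootedForests P) := by
        simp only [card_filter_forwardOrbit_eq]
    _ = ∑ P, #(univ.filter fun g : α → α => univ.filter (· ∈ periodicPts g) = P) := by
        simp only [← card_filter_periodicPts_eq, ← coe_inj, coe_filter_univ, Set.ofPred_mem_eq]
    _ = Fintype.card α ^ Fintype.card α := by
        rw [← card_eq_sum_card_fiberwise fun _ _ => mem_univ _, card_univ, Fintype.card_fun]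

end Cayley

theorem card_rooted_spanning_trees_general (n : ℕ) (j : Fin n) :
    (Finset.univ.filter (fun f : Fin n → Fin n =>
        f j = j ∧ ∀ i : Fin n, ∃ t : ℕ, f^[t] i = j)).card = n ^ (n - 2) := by
  have key := Cayley.card_sq_mul_card_rootedForests_singleton j
  rw [Fintype.card_fin] at key
  have htrees : Finset.univ.filter (fun f : Fin n → Fin n =>
      f j = j ∧ ∀ i : Fin n, ∃ t : ℕ, f^[t] i = j) = Cayley.rootedForests {j} := by
    ext f
    simp [Cayley.mem_rootedForests]
  rw [htrees]
  obtain _ | _ | m := n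
  · exact j.elim0
  · simpa using key
  · refine Nat.eq_of_mul_eq_mul_left (by positivity : 0 < (m + 2) ^ 2) ?_
    rw [key, show m + 1 + 1 - 2 = m by omega]
    ring

/-- Cardinality of the set of spanning trees rooted at `j`: there are exactly
`n ^ (n - 2)` functions `f : Fin n → Fin n` with `f j = j` such that every
vertex reaches `j` under iteration of `f`. -/
theorem card_rooted_spanning_trees (n : ℕ) (hn : 2 ≤ n) (j : Fin n) :
    (Finset.univ.filter (fun f : Fin n → Fin n =>
        f j = j ∧ ∀ i : Fin n, ∃ t : ℕ, f^[t] i = j)).card = n ^ (n - 2) :=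
  card_rooted_spanning_trees_general n j
end

section
/- Tree-orientation vector satisfies detailed balance: let n ≥ 1, let M : Matrix (Fin n) (Fin n) ℝ be detailed balanced with respect to a positive vector w₀ : Fin n → ℝ (w₀ i > 0 for all i, and M i j * w₀ j = M j i * w₀ i for all i, j). Let G : SimpleGraph (Fin n) be a tree (G.IsTree) and for k : Fin n define w^G k = ∏ over all ordered pairs (i, j) with G.Adj i j and G.dist i k = G.dist j k + 1 of M i j. Then w^G itself satisfies detailed balance with M: for all j, k : Fin n, M k j * w^G k = M j k * w^G j. -/
open scoped Classical

/-!
Orienting a tree toward `k` or toward a neighbour `j` of `k` differs only on the edge `jk`, so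
`wG k` and `wG j` share all factors except `M j k` versus `M k j`. Detailed balance of `M` then
makes `wG i * w₀ i` constant along edges, hence on the whole tree, and dividing by `w₀` turns
this constant product back into detailed balance for `wG`.
-/

namespace SimpleGraph

variable {V : Type*} {G : SimpleGraph V}

theorem Reachable.apply_eq_of_forall_adj {β : Type*} {f : V → β}
    (hf : ∀ u v, G.Adj u v → f u = f v) {u v : V} (h : G.Reachable u v) : f u = f v := by
  obtain ⟨p⟩ := h
  induction p with
  | nil => rfl
  | cons hadj _ ih => exact (hf _ _ hadj).trans ih

/-- The walks `b → k → j` and `b → a → j` both have length `dist b j`, so they are the same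
path; reading off its second vertex forces `a = j`, `b = k`. -/
theorem IsTree.eq_of_adj_of_dist_cross (hG : G.IsTree) {a b j k : V} (hab : G.Adj a b)
    (hjk : G.Adj j k) (hk : G.dist a k = G.dist b k + 1) (hj : G.dist b j = G.dist a j + 1) :
    a = j ∧ b = k := by
  have hdist : G.dist a j = G.dist b k := by
    have ha := hG.dist_eq_dist_add_one_of_adj a hjk
    have hb := hG.dist_eq_dist_add_one_of_adj b hjk
    omega
  obtain ⟨p, hp⟩ := hG.connected.exists_walk_length_eq_dist b k
  obtain ⟨r, hr⟩ := hG.connected.exists_walk_length_eq_dist a j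
  have hpath : (p.concat hjk.symm).IsPath :=
    Walk.isPath_of_length_eq_dist _ (by rw [Walk.length_concat]; omega)
  have hpath' : (Walk.cons hab.symm r).IsPath :=
    Walk.isPath_of_length_eq_dist _ (by rw [Walk.length_cons]; omega)
  have heq : Walk.cons hab.symm r = p.concat hjk.symm :=
    congrArg Subtype.val ((hG.isAcyclic.subsingleton_path b j).elim ⟨_, hpath'⟩ ⟨_, hpath⟩)
  by_cases haj : a = j
  · subst haj
    rw [dist_self] at hdist
    exact ⟨rfl, hG.connected.dist_eq_zero_iff.mp hdist.symm⟩
  · have ha : a ∈ p.support := by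
      have hsupp : a ∈ p.support ++ [j] := by
        rw [← Walk.support_concat p hjk.symm, ← heq, Walk.support_cons]
        exact List.mem_cons_of_mem _ r.start_mem_support
      simpa [haj] using hsupp
    have := dist_le (p.dropUntil a ha)
    have := p.length_dropUntil_le_length ha
    omega

noncomputable def edgesToward [Fintype V] (G : SimpleGraph V) (k : V) : Finset (V × V) :=
  Finset.univ.filter fun p : V × V => G.Adj p.1 p.2 ∧ G.dist p.1 k = G.dist p.2 k + 1

variable [Fintype V]

theorem mem_edgesToward {k : V} {p : V × V} :
    p ∈ G.edgesToward k ↔ G.Adj p.1 p.2 ∧ G.dist p.1 k = G.dist p.2 k + 1 := by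
  simp [edgesToward]

theorem mem_edgesToward_of_adj {j k : V} (hjk : G.Adj j k) : (j, k) ∈ G.edgesToward k := by
  simp [mem_edgesToward, hjk, dist_eq_one_iff_adj.mpr hjk]

theorem IsTree.erase_edgesToward_subset (hG : G.IsTree) {j k : V} (hjk : G.Adj j k) :
    (G.edgesToward k).erase (j, k) ⊆ (G.edgesToward j).erase (k, j) := by
  rintro ⟨a, b⟩
  simp only [Finset.mem_erase, mem_edgesToward, ne_eq, Prod.mk.injEq]
  rintro ⟨hne, hab, hk⟩
  refine ⟨?_, hab, ?_⟩
  · rintro ⟨rfl, rfl⟩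
    simp [dist_eq_one_iff_adj.mpr hjk] at hk
  · rcases hG.dist_eq_dist_add_one_of_adj j hab with h | h
    · simpa only [dist_comm (v := j)] using h
    · rw [dist_comm, dist_comm (u := j)] at h
      exact absurd (hG.eq_of_adj_of_dist_cross hab hjk hk h) hne

theorem IsTree.erase_edgesToward_eq (hG : G.IsTree) {j k : V} (hjk : G.Adj j k) :
    (G.edgesToward k).erase (j, k) = (G.edgesToward j).erase (k, j) :=
  (hG.erase_edgesToward_subset hjk).antisymm (hG.erase_edgesToward_subset hjk.symm)

theorem IsTree.prod_edgesToward_mul_eq {R : Type*} [CommMonoid R] (hG : G.IsTree)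
    {M : V → V → R} {w₀ : V → R} (hdb : ∀ i j, M i j * w₀ j = M j i * w₀ i)
    {j k : V} (hjk : G.Adj j k) :
    (∏ p ∈ G.edgesToward j, M p.1 p.2) * w₀ j = (∏ p ∈ G.edgesToward k, M p.1 p.2) * w₀ k := by
  rw [← Finset.mul_prod_erase _ _ (mem_edgesToward_of_adj hjk),
    ← Finset.mul_prod_erase _ _ (mem_edgesToward_of_adj hjk.symm), hG.erase_edgesToward_eq hjk,
    mul_right_comm, hdb, mul_right_comm]

end SimpleGraph

theorem detailed_balance_of_mul_eq_const {ι R : Type*} [CommMonoidWithZero R] [IsCancelMulZero R]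
    {M : ι → ι → R} {w₀ w : ι → R} (hw₀ : ∀ i, w₀ i ≠ 0)
    (hdb : ∀ i j, M i j * w₀ j = M j i * w₀ i) (hw : ∀ i j, w i * w₀ i = w j * w₀ j) (j k : ι) :
    M k j * w k = M j k * w j :=
  mul_right_cancel₀ (hw₀ k) <| calc
    M k j * w k * w₀ k = M k j * w₀ j * w j := by rw [mul_assoc, hw, mul_right_comm, mul_assoc]
    _ = M j k * w j * w₀ k := by rw [hdb, mul_right_comm]

theorem tree_orientation_detailed_balance_general (n : ℕ)
    (M : Matrix (Fin n) (Fin n) ℝ)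
    (w₀ : Fin n → ℝ) (hw₀ : ∀ i, 0 < w₀ i)
    (hdb : ∀ i j, M i j * w₀ j = M j i * w₀ i)
    (G : SimpleGraph (Fin n)) (hG : G.IsTree)
    (wG : Fin n → ℝ)
    (hwG : ∀ k : Fin n, wG k =
      ∏ p ∈ Finset.univ.filter
          (fun p : Fin n × Fin n => G.Adj p.1 p.2 ∧ G.dist p.1 k = G.dist p.2 k + 1),
        M p.1 p.2) :
    ∀ j k : Fin n, M k j * wG k = M j k * wG j := by
  have hwG' : ∀ k, wG k = ∏ p ∈ G.edgesToward k, M p.1 p.2 := hwG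
  have hconst : ∀ u v, wG u * w₀ u = wG v * w₀ v := fun u v =>
    (hG.connected u v).apply_eq_of_forall_adj (f := fun i => wG i * w₀ i) fun a b hab => by
      rw [hwG', hwG']
      exact hG.prod_edgesToward_mul_eq hdb hab
  exact detailed_balance_of_mul_eq_const (fun i => (hw₀ i).ne') hdb hconst

/-- Tree-orientation vector satisfies detailed balance: if `M` is detailed
balanced w.r.t. some positive vector, and `wG` is defined from a tree `G` by
orienting every edge toward `k` and multiplying the corresponding entries of
`M`, then `wG` itself satisfies detailed balance with `M`. -/
theorem tree_orientation_detailed_balance (n : ℕ) (hn : 1 ≤ n)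
    (M : Matrix (Fin n) (Fin n) ℝ)
    (w₀ : Fin n → ℝ) (hw₀ : ∀ i, 0 < w₀ i)
    (hdb : ∀ i j, M i j * w₀ j = M j i * w₀ i)
    (G : SimpleGraph (Fin n)) (hG : G.IsTree)
    (wG : Fin n → ℝ)
    (hwG : ∀ k : Fin n, wG k =
      ∏ p ∈ Finset.univ.filter
          (fun p : Fin n × Fin n => G.Adj p.1 p.2 ∧ G.dist p.1 k = G.dist p.2 k + 1),
        M p.1 p.2) :
    ∀ j k : Fin n, M k j * wG k = M j k * wG j :=
  tree_orientation_detailed_balance_general n M w₀ hw₀ hdb G hG wG hwG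
end

section
/- Invariant measure from a single spanning tree in the detailed balanced case: let n ≥ 1 and let M : Matrix (Fin n) (Fin n) ℝ have rows summing to one (∀ i, ∑ j, M i j = 1) and be detailed balanced with respect to a positive vector w₀ : Fin n → ℝ (w₀ i > 0 for all i, and M i j * w₀ j = M j i * w₀ i for all i, j). Let G : SimpleGraph (Fin n) be a tree (G.IsTree) and for k : Fin n define w^G k = ∏ over all ordered pairs (i, j) with G.Adj i j and G.dist i k = G.dist j k + 1 of M i j. Then w^G is a left fixed vector of M: for every k, ∑ j, w^G j * M j k = w^G k. -/
open scoped Classical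

open SimpleGraph Finset

private lemma split_ge {V : Type*} [DecidableEq V] {G : SimpleGraph V} {x u v : V}
    (q : G.Walk u v) (hx : x ∈ q.support) :
    G.dist u x + G.dist x v ≤ q.length := by
  have hspec := q.take_spec hx
  have hl : (q.takeUntil x hx).length + (q.dropUntil x hx).length = q.length := by
    rw [← SimpleGraph.Walk.length_append, hspec]
  have h1 := SimpleGraph.dist_le (q.takeUntil x hx)
  have h2 := SimpleGraph.dist_le (q.dropUntil x hx)
  omega

private lemma tree_dist_step {V : Type*} [DecidableEq V] {G : SimpleGraph V} (hG : G.IsTree)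
    {x y : V} (hxy : G.Adj x y) (k : V) :
    G.dist x k = G.dist y k + 1 ∨ G.dist y k = G.dist x k + 1 := by
  have hc := hG.isConnected
  have hxy1 : G.dist x y = 1 := SimpleGraph.dist_eq_one_iff_adj.2 hxy
  have hyx1 : G.dist y x = 1 := by rw [SimpleGraph.dist_comm]; exact hxy1
  have t1 : G.dist x k ≤ G.dist x y + G.dist y k := hc.dist_triangle
  have t2 : G.dist y k ≤ G.dist y x + G.dist x k := hc.dist_triangle
  have hne : G.dist x k ≠ G.dist y k := by
    intro he
    obtain ⟨p, hp, hpl⟩ := (hc.preconnected x k).exists_path_of_dist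
    obtain ⟨q, hq, hql⟩ := (hc.preconnected y k).exists_path_of_dist
    by_cases hx : x ∈ q.support
    · have hsg := split_ge q hx
      omega
    · have hpath : (SimpleGraph.Walk.cons hxy q).IsPath := hq.cons hx
      have heq := (hG.existsUnique_path x k).unique hpath hp
      have hlen : (SimpleGraph.Walk.cons hxy q).length = p.length := by rw [heq]
      rw [SimpleGraph.Walk.length_cons] at hlen
      omega
  omega

private lemma tree_cross {V : Type*} [DecidableEq V] {G : SimpleGraph V} (hG : G.IsTree)
    {a b i j : V} (hab : G.Adj a b) (hij : G.Adj i j)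
    (h1 : G.dist i a = G.dist j a + 1) (h2 : G.dist j b = G.dist i b + 1) :
    i = b ∧ j = a := by
  have hc := hG.isConnected
  have si := tree_dist_step hG hab i
  have sj := tree_dist_step hG hab j
  rw [show G.dist a i = G.dist i a from SimpleGraph.dist_comm,
      show G.dist b i = G.dist i b from SimpleGraph.dist_comm] at si
  rw [show G.dist a j = G.dist j a from SimpleGraph.dist_comm,
      show G.dist b j = G.dist j b from SimpleGraph.dist_comm] at sj
  have hkey : G.dist i b + 1 = G.dist i a ∧ G.dist j b = G.dist j a + 1 := by
    rcases si with si | si <;> rcases sj with sj | sj <;> omega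
  by_cases hd : G.dist j a = 0
  · have hja : j = a := (hc.dist_eq_zero_iff).1 hd
    have hib : G.dist i b = 0 := by omega
    exact ⟨(hc.dist_eq_zero_iff).1 hib, hja⟩
  · exfalso
    obtain ⟨q, hq, hql⟩ := (hc.preconnected j a).exists_path_of_dist
    obtain ⟨r, hr, hrl⟩ := (hc.preconnected i b).exists_path_of_dist
    have hba : G.dist b a = 1 := SimpleGraph.dist_eq_one_iff_adj.2 hab.symm
    have hij1 : G.dist i j = 1 := SimpleGraph.dist_eq_one_iff_adj.2 hij
    have hji1 : G.dist j i = 1 := by rw [SimpleGraph.dist_comm]; exact hij1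
    have hbq : b ∉ q.support := by
      intro hb
      have := split_ge q hb
      omega
    have hjr : j ∉ r.support := by
      intro hjm
      have := split_ge r hjm
      omega
    have hw1 : (SimpleGraph.Walk.cons hij.symm r).IsPath := hr.cons hjr
    have hbqr : b ∉ q.reverse.support := by
      rwa [SimpleGraph.Walk.support_reverse, List.mem_reverse]
    have hw2 : ((SimpleGraph.Walk.cons hab.symm q.reverse).reverse).IsPath :=
      ((hq.reverse).cons hbqr).reverse
    have heq := (hG.existsUnique_path j b).unique hw1 hw2
    have hi1 : i ∈ (SimpleGraph.Walk.cons hij.symm r).support := by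
      rw [SimpleGraph.Walk.support_cons]
      exact List.mem_cons_of_mem _ r.start_mem_support
    rw [heq] at hi1
    rw [SimpleGraph.Walk.support_reverse, List.mem_reverse,
        SimpleGraph.Walk.support_cons] at hi1
    have hib : i ≠ b := by
      intro h
      have h0 : G.dist i b = 0 := by rw [h]; exact SimpleGraph.dist_self
      omega
    rcases List.mem_cons.1 hi1 with h | h
    · exact hib h
    · rw [SimpleGraph.Walk.support_reverse, List.mem_reverse] at h
      have := split_ge q h
      omega

/-- Invariant measure from a single spanning tree in the detailed balanced
case: if `M` has rows summing to one and is detailed balanced w.r.t. a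
positive vector, then the vector `wG` obtained from any tree `G` by orienting
every edge toward `k` and multiplying the corresponding entries of `M` is a
left fixed vector of `M`. -/
theorem tree_orientation_invariant_measure (n : ℕ) (hn : 1 ≤ n)
    (M : Matrix (Fin n) (Fin n) ℝ) (hrow : ∀ i, ∑ j, M i j = 1)
    (w₀ : Fin n → ℝ) (hw₀ : ∀ i, 0 < w₀ i)
    (hdb : ∀ i j, M i j * w₀ j = M j i * w₀ i)
    (G : SimpleGraph (Fin n)) (hG : G.IsTree)
    (wG : Fin n → ℝ)
    (hwG : ∀ k : Fin n, wG k =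
      ∏ p ∈ Finset.univ.filter
          (fun p : Fin n × Fin n => G.Adj p.1 p.2 ∧ G.dist p.1 k = G.dist p.2 k + 1),
        M p.1 p.2) :
    ∀ k : Fin n, ∑ j, wG j * M j k = wG k := by
  have hc := hG.isConnected
  -- adjacent-step invariance
  have hstep : ∀ a b : Fin n, G.Adj a b → wG a * w₀ a = wG b * w₀ b := by
    intro a b hab
    set E : Fin n → Finset (Fin n × Fin n) := fun k =>
      Finset.univ.filter
        (fun p : Fin n × Fin n => G.Adj p.1 p.2 ∧ G.dist p.1 k = G.dist p.2 k + 1) with hE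
    have hmemE : ∀ (k : Fin n) (p : Fin n × Fin n),
        p ∈ E k ↔ G.Adj p.1 p.2 ∧ G.dist p.1 k = G.dist p.2 k + 1 := by
      intro k p; simp [hE]
    have hbaa : (b, a) ∈ E a := by
      rw [hmemE]
      refine ⟨hab.symm, ?_⟩
      simp [SimpleGraph.dist_eq_one_iff_adj.2 hab.symm, SimpleGraph.dist_self]
    have habb : (a, b) ∈ E b := by
      rw [hmemE]
      refine ⟨hab, ?_⟩
      simp [SimpleGraph.dist_eq_one_iff_adj.2 hab, SimpleGraph.dist_self]
    have herase : (E a).erase (b, a) = (E b).erase (a, b) := by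
      ext p
      rw [Finset.mem_erase, Finset.mem_erase, hmemE, hmemE]
      constructor
      · rintro ⟨hpne, hadj, hdist⟩
        rcases tree_dist_step hG hadj b with h | h
        · refine ⟨?_, hadj, h⟩
          intro hpe
          rw [hpe] at hdist
          simp only [SimpleGraph.dist_self] at hdist
          have : G.dist b a = 1 := SimpleGraph.dist_eq_one_iff_adj.2 hab.symm
          omega
        · obtain ⟨h1, h2⟩ := tree_cross hG hab hadj hdist h
          exact absurd (Prod.ext h1 h2) hpne
      · rintro ⟨hpne, hadj, hdist⟩
        rcases tree_dist_step hG hadj a with h | h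
        · refine ⟨?_, hadj, h⟩
          intro hpe
          rw [hpe] at hdist
          simp only [SimpleGraph.dist_self] at hdist
          have : G.dist a b = 1 := SimpleGraph.dist_eq_one_iff_adj.2 hab
          omega
        · obtain ⟨h1, h2⟩ := tree_cross hG hab.symm hadj hdist h
          exact absurd (Prod.ext h1 h2) hpne
    have hwa : wG a = M b a * ∏ p ∈ (E a).erase (b, a), M p.1 p.2 := by
      rw [hwG a, ← Finset.mul_prod_erase _ _ hbaa]
    have hwb : wG b = M a b * ∏ p ∈ (E b).erase (a, b), M p.1 p.2 := by
      rw [hwG b, ← Finset.mul_prod_erase _ _ habb]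
    rw [hwa, hwb, ← herase]
    linear_combination (∏ p ∈ (E a).erase (b, a), M p.1 p.2) * (hdb a b).symm
  -- global invariance along walks
  have hinv : ∀ x y : Fin n, wG x * w₀ x = wG y * w₀ y := by
    intro x y
    obtain ⟨w⟩ := hc.preconnected x y
    induction w with
    | nil => rfl
    | cons h p ih => exact (hstep _ _ h).trans ih
  intro k
  have hsum : ∀ j, wG j * M j k = wG k * M k j := by
    intro j
    have h0 : w₀ j ≠ 0 := (hw₀ j).ne'
    have hmain : wG j * M j k * w₀ j = wG k * M k j * w₀ j := by
      calc wG j * M j k * w₀ j = (wG j * w₀ j) * M j k := by ring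
        _ = (wG k * w₀ k) * M j k := by rw [hinv j k]
        _ = wG k * (M j k * w₀ k) := by ring
        _ = wG k * (M k j * w₀ j) := by rw [hdb j k]
        _ = wG k * M k j * w₀ j := by ring
    exact mul_right_cancel₀ h0 hmain
  calc ∑ j, wG j * M j k = ∑ j, wG k * M k j :=
        Finset.sum_congr rfl (fun j _ => hsum j)
    _ = wG k * ∑ j, M k j := by rw [Finset.mul_sum]
    _ = wG k := by rw [hrow k, mul_one]
end
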